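/- arXiv:0903.3439 — 5 statements merged into one kernel-verified Lean document; each statement's English description precedes it below -/
import Mathlib

section
/- Let R be a standard graded Cohen–Macaulay algebra of dimension d ≥ 1 over a field k, with homogeneous maximal ideal 𝔪 and a-invariant a, and let J be an ideal generated by a linear system of parameters. Then for all integers i and all j ≥ a + d, one has J^i : 𝔪^j = J^{i-j+a+d} : 𝔪^{a+d}. -/
/-!
As `J` is a reduction of `𝔪` with reduction number `r = a + d`, we have
`𝔪^(p + r) = J^p 𝔪^r`, so the statement reduces to `J^(n + 1) : J M = J^n : M` for every
ideal `M`. This in turn follows from `J^(n + 1) : y₁ = J^n`, which holds because a regular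
sequence is quasi-regular: a form `F` of degree `n` with `F(y) ∈ J^(n + 1)` has all its
coefficients in `J` (Rees; Matsumura, *Commutative Ring Theory*, Theorem 16.2).
-/

/-- Integer power of an ideal; by convention nonpositive exponents give the unit ideal. -/
def ipow {R : Type*} [CommRing R] (I : Ideal R) (n : ℤ) : Ideal R := I ^ n.toNat

namespace MvPolynomial

variable {R σ : Type*} [CommRing R]

theorem mem_supported_iff_support_subset {s : Set σ} {p : MvPolynomial σ R} :
    p ∈ supported R s ↔ ∀ d ∈ p.support, ↑d.support ⊆ s := by
  simp only [mem_supported, Set.subset_def, Finset.mem_coe, mem_vars_iff_mem_support]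
  exact ⟨fun h d hd i hi => h i ⟨d, hd, hi⟩, fun h i ⟨d, hd, hi⟩ => h d hd i hi⟩

theorem isHomogeneous_iff_degree_eq {p : MvPolynomial σ R} {n : ℕ} :
    p.IsHomogeneous n ↔ ∀ d ∈ p.support, d.degree = n := by
  simp only [IsHomogeneous, IsWeightedHomogeneous, mem_support_iff, Finsupp.degree_eq_weight_one]
  rfl

variable {y : σ → R} {s : Set σ}

theorem prod_pow_mem_span_pow {d : σ →₀ ℕ} (hd : ↑d.support ⊆ s) :
    ∏ i ∈ d.support, y i ^ d i ∈ Ideal.span (y '' s) ^ d.degree := by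
  rw [Finsupp.degree_apply, ← Finset.prod_pow_eq_pow_sum]
  exact Ideal.prod_mem_prod fun i hi =>
    Ideal.pow_mem_pow (Ideal.subset_span (Set.mem_image_of_mem y (hd hi))) _

theorem eval_mem_mul_pow {I : Ideal R} {n : ℕ} {F : MvPolynomial σ R} (hFs : F ∈ supported R s)
    (hF : F.IsHomogeneous n) (hFI : F ∈ I.map C) :
    eval y F ∈ I * Ideal.span (y '' s) ^ n := by
  rw [eval_eq]
  refine Ideal.sum_mem _ fun d hd => Ideal.mul_mem_mul (mem_map_C_iff.1 hFI d) ?_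
  rw [← isHomogeneous_iff_degree_eq.1 hF d hd]
  exact prod_pow_mem_span_pow (mem_supported_iff_support_subset.1 hFs d hd)

theorem eval_mem_pow {n : ℕ} {F : MvPolynomial σ R} (hFs : F ∈ supported R s)
    (hF : F.IsHomogeneous n) : eval y F ∈ Ideal.span (y '' s) ^ n := by
  simpa using eval_mem_mul_pow (I := ⊤) hFs hF (by rw [Ideal.map_top]; trivial)

theorem exists_eval_eq_of_mem_span {z : R} (hz : z ∈ Ideal.span (y '' s)) :
    ∃ F ∈ supported R s, F.IsHomogeneous 1 ∧ eval y F = z := by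
  induction hz using Submodule.span_induction with
  | mem z hz =>
    obtain ⟨i, hi, rfl⟩ := hz
    exact ⟨X i, Algebra.subset_adjoin ⟨i, hi, rfl⟩, isHomogeneous_X R i, eval_X _⟩
  | zero => exact ⟨0, zero_mem _, isHomogeneous_zero _ _ _, map_zero _⟩
  | add _ _ _ _ ih₁ ih₂ =>
    obtain ⟨F, hFs, hF, rfl⟩ := ih₁
    obtain ⟨G, hGs, hG, rfl⟩ := ih₂
    exact ⟨F + G, add_mem hFs hGs, hF.add hG, map_add _ _ _⟩
  | smul r _ _ ih =>
    obtain ⟨F, hFs, hF, rfl⟩ := ih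
    exact ⟨C r * F, mul_mem (Subalgebra.algebraMap_mem _ r) hFs, hF.C_mul r, by simp⟩

theorem exists_eval_eq_of_mem_pow {n : ℕ} {z : R} (hz : z ∈ Ideal.span (y '' s) ^ n) :
    ∃ F ∈ supported R s, F.IsHomogeneous n ∧ eval y F = z := by
  induction hz using Submodule.pow_induction_on_left' with
  | algebraMap r => exact ⟨C r, Subalgebra.algebraMap_mem _ r, isHomogeneous_C _ r, eval_C r⟩
  | add _ _ _ _ _ ih₁ ih₂ =>
    obtain ⟨F, hFs, hF, rfl⟩ := ih₁
    obtain ⟨G, hGs, hG, rfl⟩ := ih₂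
    exact ⟨F + G, add_mem hFs hGs, hF.add hG, map_add _ _ _⟩
  | mem_mul m hm n _ _ ih =>
    obtain ⟨F, hFs, hF, rfl⟩ := ih
    obtain ⟨P, hPs, hP, rfl⟩ := exists_eval_eq_of_mem_span hm
    exact ⟨P * F, mul_mem hPs hFs, by simpa [add_comm] using hP.mul hF, map_mul _ _ _⟩

theorem exists_eval_eq_of_mem_mul_pow {I : Ideal R} {n : ℕ} {z : R}
    (hz : z ∈ I * Ideal.span (y '' s) ^ n) :
    ∃ F ∈ supported R s, F.IsHomogeneous n ∧ F ∈ I.map C ∧ eval y F = z := by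
  induction hz using Submodule.mul_induction_on' with
  | mem_mul_mem a ha b hb =>
    obtain ⟨F, hFs, hF, rfl⟩ := exists_eval_eq_of_mem_pow hb
    exact ⟨C a * F, mul_mem (Subalgebra.algebraMap_mem _ a) hFs, hF.C_mul a,
      Ideal.mul_mem_right _ _ (Ideal.mem_map_of_mem C ha), by simp⟩
  | add _ _ _ _ ih₁ ih₂ =>
    obtain ⟨F, hFs, hF, hFI, rfl⟩ := ih₁
    obtain ⟨G, hGs, hG, hGI, rfl⟩ := ih₂
    exact ⟨F + G, add_mem hFs hGs, hF.add hG, add_mem hFI hGI, map_add _ _ _⟩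

theorem mem_map_C_of_C_mul_mem {I : Ideal R} {z : R} (hz : ∀ u, z * u ∈ I → u ∈ I)
    {H : MvPolynomial σ R} (h : C z * H ∈ I.map C) : H ∈ I.map C :=
  mem_map_C_iff.2 fun d => hz _ (by simpa using mem_map_C_iff.1 h d)

theorem mem_map_C_of_X_mul_mem {I : Ideal R} {i : σ} {H : MvPolynomial σ R}
    (h : X i * H ∈ I.map C) : H ∈ I.map C :=
  mem_map_C_iff.2 fun d => coeff_X_mul d i H ▸ mem_map_C_iff.1 h (Finsupp.single i 1 + d)

theorem exists_X_mul_add_of_mem_supported_insert {i : σ} {n : ℕ} {F : MvPolynomial σ R}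
    (hFs : F ∈ supported R (insert i s)) (hF : F.IsHomogeneous (n + 1)) :
    ∃ H ∈ supported R (insert i s), H.IsHomogeneous n ∧
      ∃ G ∈ supported R s, G.IsHomogeneous (n + 1) ∧ X i * H + G = F := by
  classical
  rw [mem_supported_iff_support_subset] at hFs
  rw [isHomogeneous_iff_degree_eq] at hF
  have hH : ∀ d ∈ (F.divMonomial (Finsupp.single i 1)).support,
      Finsupp.single i 1 + d ∈ F.support := fun d hd => by simpa using hd
  have hG : ∀ d ∈ (F.modMonomial (Finsupp.single i 1)).support,
      d ∈ F.support ∧ d i = 0 := fun d hd => by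
    have hle : ¬ Finsupp.single i 1 ≤ d := fun hle => by
      simp [coeff_modMonomial_of_le _ hle] at hd
    rw [mem_support_iff, coeff_modMonomial_of_not_le _ hle] at hd
    refine ⟨mem_support_iff.2 hd, ?_⟩
    simpa [Finsupp.single_le_iff] using hle
  refine ⟨_, mem_supported_iff_support_subset.2 fun d hd => ?_,
    isHomogeneous_iff_degree_eq.2 fun d hd => ?_,
    _, mem_supported_iff_support_subset.2 fun d hd => ?_,
    isHomogeneous_iff_degree_eq.2 fun d hd => hF d (hG d hd).1,
    divMonomial_add_modMonomial_single F i⟩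
  · exact (Finset.coe_subset.2 (Finsupp.support_mono le_add_self)).trans (hFs _ (hH d hd))
  · have := hF _ (hH d hd)
    rw [map_add, Finsupp.degree_single] at this
    omega
  · intro j hj
    obtain ⟨hdF, hdi⟩ := hG d hd
    rcases hFs d hdF hj with rfl | hjs
    · simp [hdi] at hj
    · exact hjs

/-- Injectivity in degree `n` of the natural map `(R ⧸ J)[X_i | i ∈ s] → gr_J R`, where
`J = (y_i | i ∈ s)`. -/
def QuasiRegularInDegree (y : σ → R) (s : Set σ) (n : ℕ) : Prop :=
  ∀ F ∈ supported R s, F.IsHomogeneous n → eval y F ∈ Ideal.span (y '' s) ^ (n + 1) →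
    F ∈ (Ideal.span (y '' s)).map C

theorem quasiRegularInDegree_of_eval_eq_zero {n : ℕ}
    (h : ∀ F ∈ supported R s, F.IsHomogeneous n → eval y F = 0 →
      F ∈ (Ideal.span (y '' s)).map C) :
    QuasiRegularInDegree y s n := by
  intro F hFs hF hFJ
  rw [pow_succ'] at hFJ
  obtain ⟨T, hTs, hT, hTJ, hTF⟩ := exists_eval_eq_of_mem_mul_pow hFJ
  have hFT := h (F - T) (sub_mem hFs hTs) (hF.sub hT) (by rw [map_sub, hTF, sub_self])
  simpa using add_mem hFT hTJ

theorem quasiRegularInDegree_zero : QuasiRegularInDegree y s 0 := by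
  intro F _ hF hFJ
  have hFC : F = C (coeff 0 F) := totalDegree_eq_zero_iff_eq_C.1 (Nat.le_zero.1 hF.totalDegree_le)
  rw [hFC] at hFJ ⊢
  rw [eval_C, zero_add, pow_one] at hFJ
  exact Ideal.mem_map_of_mem C hFJ

theorem quasiRegularInDegree_empty (y : σ → R) (n : ℕ) : QuasiRegularInDegree y ∅ n := by
  intro F hFs _ hFJ
  rw [supported_empty, Algebra.mem_bot] at hFs
  obtain ⟨r, rfl⟩ := hFs
  simp_all

theorem mem_pow_of_eval_mul_mem_pow (hq : ∀ n, QuasiRegularInDegree y s n)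
    {Q : MvPolynomial σ R} {e : ℕ} (hQs : Q ∈ supported R s) (hQ : Q.IsHomogeneous e)
    (hcancel : ∀ H, Q * H ∈ (Ideal.span (y '' s)).map C → H ∈ (Ideal.span (y '' s)).map C)
    (m : ℕ) {u : R} (hu : eval y Q * u ∈ Ideal.span (y '' s) ^ (m + e)) :
    u ∈ Ideal.span (y '' s) ^ m := by
  induction m generalizing u with
  | zero => simp
  | succ m ih =>
    obtain ⟨H, hHs, hH, rfl⟩ :=
      exists_eval_eq_of_mem_pow (ih (Ideal.pow_le_pow_right (by omega) hu))
    have hQH : Q * H ∈ (Ideal.span (y '' s)).map C :=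
      hq (e + m) _ (mul_mem hQs hHs) (hQ.mul hH) (by rwa [map_mul, add_comm e, add_right_comm])
    rw [pow_succ']
    exact eval_mem_mul_pow hHs hH (hcancel H hQH)

theorem mem_pow_of_mul_mem_pow (hq : ∀ n, QuasiRegularInDegree y s n) {z : R}
    (hz : ∀ u, z * u ∈ Ideal.span (y '' s) → u ∈ Ideal.span (y '' s)) (m : ℕ) {u : R}
    (hu : z * u ∈ Ideal.span (y '' s) ^ m) : u ∈ Ideal.span (y '' s) ^ m :=
  mem_pow_of_eval_mul_mem_pow hq (Subalgebra.algebraMap_mem _ z) (isHomogeneous_C σ z)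
    (fun _ => mem_map_C_of_C_mul_mem hz) m (by rwa [algebraMap_eq, eval_C])

theorem mem_pow_of_mul_mem_pow_succ (hq : ∀ n, QuasiRegularInDegree y s n) {i : σ} (hi : i ∈ s)
    (m : ℕ) {u : R} (hu : y i * u ∈ Ideal.span (y '' s) ^ (m + 1)) :
    u ∈ Ideal.span (y '' s) ^ m :=
  mem_pow_of_eval_mul_mem_pow hq (Algebra.subset_adjoin ⟨i, hi, rfl⟩) (isHomogeneous_X R i)
    (fun _ => mem_map_C_of_X_mul_mem) m (by rwa [eval_X])

theorem quasiRegularInDegree_insert (hq : ∀ n, QuasiRegularInDegree y s n) {i : σ}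
    (hi : ∀ u, y i * u ∈ Ideal.span (y '' s) → u ∈ Ideal.span (y '' s)) (n : ℕ) :
    QuasiRegularInDegree y (insert i s) n := by
  induction n with
  | zero => exact quasiRegularInDegree_zero
  | succ n ih =>
    refine quasiRegularInDegree_of_eval_eq_zero fun F hFs hF hF0 => ?_
    obtain ⟨H, hHs, hH, G, hGs, hG, rfl⟩ := exists_X_mul_add_of_mem_supported_insert hFs hF
    have hspan : Ideal.span (y '' s) ≤ Ideal.span (y '' insert i s) :=
      Ideal.span_mono (Set.image_mono (Set.subset_insert i s))
    have hyi : y i ∈ Ideal.span (y '' insert i s) :=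
      Ideal.subset_span ⟨i, Set.mem_insert i s, rfl⟩
    have hHG : y i * eval y H = -eval y G := by
      rw [map_add, map_mul, eval_X] at hF0
      exact eq_neg_of_add_eq_zero_left hF0
    have hHs' : eval y H ∈ Ideal.span (y '' s) ^ (n + 1) :=
      mem_pow_of_mul_mem_pow hq hi _ (hHG ▸ neg_mem (eval_mem_pow hGs hG))
    have hHJ : H ∈ (Ideal.span (y '' insert i s)).map C :=
      ih H hHs hH (Ideal.pow_right_mono hspan _ hHs')
    obtain ⟨P, hPs, hP, hPH⟩ := exists_eval_eq_of_mem_pow (neg_mem hHs')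
    have hGP : G - C (y i) * P ∈ (Ideal.span (y '' s)).map C := by
      refine hq (n + 1) _ (sub_mem hGs (mul_mem (Subalgebra.algebraMap_mem _ _) hPs))
        (hG.sub (hP.C_mul _)) ?_
      rw [map_sub, map_mul, eval_C, hPH, mul_neg, hHG, sub_neg_eq_add, add_neg_cancel]
      exact zero_mem _
    rw [← sub_add_cancel G (C (y i) * P)]
    exact add_mem (Ideal.mul_mem_left _ _ hHJ) (add_mem (Ideal.map_mono hspan hGP)
      (Ideal.mul_mem_right _ _ (Ideal.mem_map_of_mem C hyi)))

end MvPolynomial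

namespace RingTheory.Sequence.IsWeaklyRegular

open MvPolynomial

variable {R : Type*} [CommRing R] {d : ℕ} {y : Fin d → R}

theorem mem_of_mul_mem_span_prefix (h : IsWeaklyRegular R (List.ofFn y)) {c : ℕ} (hc : c < d)
    {u : R} (hu : y ⟨c, hc⟩ * u ∈ Ideal.span (y '' {j | (j : ℕ) < c})) :
    u ∈ Ideal.span (y '' {j | (j : ℕ) < c}) := by
  have hreg := h.regular_mod_prev c (by simpa using hc)
  have hprefix : (Ideal.ofList ((List.ofFn y).take c) • ⊤ : Submodule R R) =
      Ideal.span (y '' {j | (j : ℕ) < c}) := by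
    rw [Ideal.smul_eq_mul, Ideal.mul_top, Ideal.ofList]
    congr 1
    ext x
    simp only [List.mem_take_iff_getElem, List.getElem_ofFn, List.length_ofFn, lt_min_iff,
      Set.mem_ofPred_eq, Set.mem_image]
    exact ⟨fun ⟨j, hj, hx⟩ => ⟨⟨j, hj.2⟩, hj.1, hx⟩, fun ⟨j, hj, hx⟩ => ⟨j, ⟨hj, j.2⟩, hx⟩⟩
  rw [List.getElem_ofFn, hprefix] at hreg
  rw [← Submodule.Quotient.mk_eq_zero] at hu ⊢
  refine hreg ?_
  beta_reduce
  rw [smul_zero, ← Submodule.Quotient.mk_smul]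
  exact hu

theorem quasiRegularInDegree (h : IsWeaklyRegular R (List.ofFn y)) (n : ℕ) :
    QuasiRegularInDegree y Set.univ n := by
  suffices ∀ c ≤ d, ∀ n, QuasiRegularInDegree y {j | (j : ℕ) < c} n by
    simpa using this d le_rfl n
  intro c hc
  induction c with
  | zero => simpa using quasiRegularInDegree_empty y
  | succ c ih =>
    have hprefix :
        {j : Fin d | (j : ℕ) < c + 1} = insert ⟨c, hc⟩ {j : Fin d | (j : ℕ) < c} := by
      ext j
      simp only [Set.mem_ofPred_eq, Set.mem_insert_iff, Fin.ext_iff]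
      omega
    rw [hprefix]
    exact quasiRegularInDegree_insert (ih (by omega)) fun _ => h.mem_of_mul_mem_span_prefix hc

end RingTheory.Sequence.IsWeaklyRegular

namespace Ideal

variable {R : Type*} [CommRing R] {J : Ideal R}

theorem pow_add_eq_pow_mul_pow_of_reduction {I : Ideal R} {r : ℕ}
    (h : ∀ n ≥ r, I ^ (n + 1) = J * I ^ n) (p : ℕ) : I ^ (p + r) = J ^ p * I ^ r := by
  induction p with
  | zero => simp
  | succ p ih => rw [add_right_comm, h _ (by omega), ih, pow_succ', mul_assoc]

theorem colon_pow_succ_mul_eq {x : R} (hx : x ∈ J) {n : ℕ}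
    (hcancel : ∀ u, x * u ∈ J ^ (n + 1) → u ∈ J ^ n) (M : Ideal R) :
    (J ^ (n + 1)).colon (↑(J * M) : Set R) = (J ^ n).colon (M : Set R) := by
  ext r
  simp only [Submodule.mem_colon, smul_eq_mul, SetLike.mem_coe]
  refine ⟨fun h m hm => hcancel _ ?_, fun h w hw => ?_⟩
  · rw [mul_left_comm]
    exact h _ (mul_mem_mul hx hm)
  · induction hw using Submodule.mul_induction_on' with
    | mem_mul_mem a ha b hb =>
      rw [mul_left_comm, pow_succ']
      exact mul_mem_mul ha (h b hb)
    | add _ _ _ _ h₁ h₂ =>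
      rw [mul_add]
      exact add_mem h₁ h₂

theorem colon_pow_pow_mul_eq {x : R} (hx : x ∈ J)
    (hcancel : ∀ n u, x * u ∈ J ^ (n + 1) → u ∈ J ^ n) (M : Ideal R) (N p : ℕ) :
    (J ^ N).colon (↑(J ^ p * M) : Set R) = (J ^ (N - p)).colon (M : Set R) := by
  induction p generalizing N with
  | zero => simp
  | succ p ih =>
    rw [pow_succ', mul_assoc]
    cases N with
    | zero => simp
    | succ N => rw [colon_pow_succ_mul_eq hx (hcancel N), ih, Nat.add_sub_add_right]

end Ideal

theorem statement_1_general
    {R : Type*} [CommRing R]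
    -- `R` has dimension `d ≥ 1`:
    (d : ℕ) (hd : 1 ≤ d)
    -- `𝔪` is the homogeneous maximal ideal:
    (𝔪 : Ideal R)
    -- `y` is a linear system of parameters; its regularity encodes that `R` is Cohen–Macaulay:
    (y : Fin d → R)
    (hyreg : RingTheory.Sequence.IsRegular R (List.ofFn y))
    (J : Ideal R) (hJ : J = Ideal.span (Set.range y))
    -- `a` is the `a`-invariant of `R`, characterized by the reduction number
    -- `r_J(𝔪) = a + d`:
    (a : ℤ) (ha : 0 ≤ a + d)
    (hred : ∀ n : ℤ, a + d ≤ n → ipow 𝔪 (n + 1) = J * ipow 𝔪 n)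
    (i j : ℤ) (hj : a + d ≤ j) :
    Submodule.colon (ipow J i) (ipow 𝔪 j)
      = Submodule.colon (ipow J (i - j + a + d)) (ipow 𝔪 (a + d)) := by
  have hy : y ⟨0, hd⟩ ∈ J := hJ ▸ Ideal.subset_span (Set.mem_range_self _)
  have hcancel : ∀ n u, y ⟨0, hd⟩ * u ∈ J ^ (n + 1) → u ∈ J ^ n := by
    rw [hJ, ← Set.image_univ]
    exact MvPolynomial.mem_pow_of_mul_mem_pow_succ
      hyreg.toIsWeaklyRegular.quasiRegularInDegree (Set.mem_univ _)
  have hred' : ∀ n ≥ (a + d).toNat, 𝔪 ^ (n + 1) = J * 𝔪 ^ n := fun n hn => by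
    simpa [ipow, Int.toNat_add_nat (Int.natCast_nonneg n)] using hred n (by omega)
  have h𝔪 : ipow 𝔪 j = J ^ (j - (a + d)).toNat * ipow 𝔪 (a + d) := by
    rw [ipow, ipow, ← Ideal.pow_add_eq_pow_mul_pow_of_reduction hred']
    congr 1
    omega
  rw [h𝔪, ipow, ipow, Ideal.colon_pow_pow_mul_eq hy hcancel]
  congr 3
  omega

/-- **Remark 2.2**: Let `R` be a standard graded Cohen–Macaulay algebra of dimension `d ≥ 1`
over a field `k`, with homogeneous maximal ideal `𝔪` and `a`-invariant `a`, and let `J` be an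
ideal generated by a linear system of parameters.  Then for all integers `i` and all
`j ≥ a + d` one has `J^i : 𝔪^j = J^(i-j+a+d) : 𝔪^(a+d)`. -/
theorem statement_1
    {k R : Type*} [Field k] [CommRing R] [Algebra k R] [IsNoetherianRing R]
    -- `R` is standard graded over `k`:
    (𝒜 : ℤ → Submodule k R) [GradedAlgebra 𝒜]
    (hneg : ∀ i : ℤ, i < 0 → 𝒜 i = ⊥)
    (hstd : ∀ i : ℤ, 0 ≤ i → 𝒜 (i + 1) = 𝒜 1 * 𝒜 i)
    -- `R` has dimension `d ≥ 1`:
    (d : ℕ) (hd : 1 ≤ d) (hdim : ringKrullDim R = d)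
    -- `𝔪` is the homogeneous maximal ideal:
    (𝔪 : Ideal R) (h𝔪 : 𝔪 = Ideal.span (𝒜 1 : Set R))
    -- `y` is a linear system of parameters; its regularity encodes that `R` is Cohen–Macaulay:
    (y : Fin d → R) (hy1 : ∀ t, y t ∈ 𝒜 1)
    (hyreg : RingTheory.Sequence.IsRegular R (List.ofFn y))
    (J : Ideal R) (hJ : J = Ideal.span (Set.range y))
    (hsop : 𝔪 ≤ J.radical)
    -- `a` is the `a`-invariant of `R`, characterized by the reduction number
    -- `r_J(𝔪) = a + d`:
    (a : ℤ) (ha : 0 ≤ a + d)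
    (hred : ∀ n : ℤ, a + d ≤ n → ipow 𝔪 (n + 1) = J * ipow 𝔪 n)
    (hmin : ¬ ipow 𝔪 (a + d) = J * ipow 𝔪 (a + d - 1))
    (i j : ℤ) (hj : a + d ≤ j) :
    Submodule.colon (ipow J i) (ipow 𝔪 j)
      = Submodule.colon (ipow J (i - j + a + d)) (ipow 𝔪 (a + d)) :=
  statement_1_general d hd 𝔪 y hyreg J hJ a ha hred i j hj
end

section
/- Let R be a reduced one-dimensional standard graded Cohen–Macaulay k-algebra with a-invariant a, K its total ring of quotients, S the integral closure of R in K, and y a linear parameter. Then 𝔪^{a+1} = (y^{a+1}) :_R ((y^{a+1}) :_R 𝔪^{a+1}). -/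
open DirectSum

section ReductionNumberOne

variable {R : Type*} [CommRing R] {I : Ideal R} {x u : R}

theorem Ideal.le_colon_colon (N : Ideal R) : I ≤ N.colon (N.colon (I : Set R) : Set R) :=
  fun x hx => Submodule.mem_colon.2 fun γ hγ => by
    rw [smul_eq_mul, mul_comm]
    exact Submodule.mem_colon.1 hγ x hx

theorem Ideal.pow_add_eq_span_singleton_pow_mul {y : R} {t : ℕ}
    (hred : ∀ s, t ≤ s → I ^ (s + 1) = Ideal.span {y} * I ^ s) (n : ℕ) :
    I ^ (t + n) = Ideal.span {y ^ n} * I ^ t := by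
  induction n with
  | zero => simp
  | succ n ih =>
    rw [← add_assoc, hred _ (Nat.le_add_right t n), ih, ← mul_assoc,
      Ideal.span_singleton_mul_span_singleton, pow_succ']

theorem Ideal.mem_colon_span_singleton_iff {S : Set R} {r : R} :
    r ∈ (Ideal.span {x}).colon S ↔ ∀ s ∈ S, x ∣ r * s := by
  simp only [Submodule.mem_colon, smul_eq_mul, Ideal.mem_span_singleton]

theorem Ideal.colon_mul_le_span_singleton_mul_colon (hx : x ∈ nonZeroDivisors R)
    (hI : I * I = Ideal.span {x} * I) :
    (Ideal.span {x}).colon I * I ≤ Ideal.span {x} * (Ideal.span {x}).colon I := by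
  refine Ideal.mul_le.2 fun γ hγ m hm => ?_
  rw [Ideal.mem_colon_span_singleton_iff] at hγ
  obtain ⟨w, hw⟩ := hγ m hm
  refine Ideal.mem_span_singleton_mul.2 ⟨w, ?_, hw.symm⟩
  refine Ideal.mem_colon_span_singleton_iff.2 fun m' hm' => ?_
  obtain ⟨μ, hμ, hmm'⟩ := Ideal.mem_span_singleton_mul.1 (hI ▸ Ideal.mul_mem_mul hm hm')
  rw [← dvd_cancel_left_mem_nonZeroDivisors hx,
    show x * (w * m') = x * (γ * μ) by rw [← mul_assoc, ← hw, mul_assoc, ← hmm']; ring]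
  exact mul_dvd_mul_left x (hγ μ hμ)

theorem Ideal.span_singleton_mul_colon_le (hx : x ∈ nonZeroDivisors R)
    (hI : I * I = Ideal.span {x} * I)
    (hu : u ∈ (Ideal.span {x}).colon ((Ideal.span {x}).colon I)) :
    Ideal.span {u} * (Ideal.span {x}).colon I ≤ Ideal.span {x} * (Ideal.span {x}).colon I := by
  rw [Ideal.mem_colon_span_singleton_iff] at hu
  refine Ideal.span_singleton_mul_le_iff.2 fun γ hγ => ?_
  obtain ⟨w, hw⟩ := hu γ hγ
  refine Ideal.mem_span_singleton_mul.2 ⟨w, ?_, hw.symm⟩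
  refine Ideal.mem_colon_span_singleton_iff.2 fun m hm => ?_
  obtain ⟨w', hw', hγm⟩ := Ideal.mem_span_singleton_mul.1
    (Ideal.colon_mul_le_span_singleton_mul_colon hx hI (Ideal.mul_mem_mul hγ hm))
  rw [← dvd_cancel_left_mem_nonZeroDivisors hx,
    show x * (w * m) = x * (u * w') by rw [← mul_assoc, ← hw, mul_assoc, ← hγm]; ring]
  exact mul_dvd_mul_left x (hu w' hw')

theorem Ideal.span_singleton_pow_mul_colon_le (hx : x ∈ nonZeroDivisors R)
    (hI : I * I = Ideal.span {x} * I)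
    (hu : u ∈ (Ideal.span {x}).colon ((Ideal.span {x}).colon I)) (n : ℕ) :
    Ideal.span {u ^ n} * (Ideal.span {x}).colon I ≤
      Ideal.span {x ^ n} * (Ideal.span {x}).colon I := by
  induction n with
  | zero => simp
  | succ n ih =>
    calc Ideal.span {u ^ (n + 1)} * (Ideal.span {x}).colon I
        = Ideal.span {u} * (Ideal.span {u ^ n} * (Ideal.span {x}).colon I) := by
          rw [← mul_assoc, Ideal.span_singleton_mul_span_singleton, pow_succ']
      _ ≤ Ideal.span {u} * (Ideal.span {x ^ n} * (Ideal.span {x}).colon I) :=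
          Ideal.mul_mono_right ih
      _ = Ideal.span {x ^ n} * (Ideal.span {u} * (Ideal.span {x}).colon I) := by ring
      _ ≤ Ideal.span {x ^ n} * (Ideal.span {x} * (Ideal.span {x}).colon I) :=
          Ideal.mul_mono_right (Ideal.span_singleton_mul_colon_le hx hI hu)
      _ = Ideal.span {x ^ (n + 1)} * (Ideal.span {x}).colon I := by
          rw [← mul_assoc, Ideal.span_singleton_mul_span_singleton, pow_succ]

theorem Ideal.pow_dvd_pow_succ_of_mem_colon_colon (hx : x ∈ nonZeroDivisors R)
    (hI : I * I = Ideal.span {x} * I)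
    (hu : u ∈ (Ideal.span {x}).colon ((Ideal.span {x}).colon I)) (n : ℕ) :
    x ^ n ∣ u ^ (n + 1) := by
  have hxJ : x ∈ (Ideal.span {x}).colon I :=
    Ideal.mem_colon_span_singleton_iff.2 fun m _ => dvd_mul_right x m
  have := Ideal.mul_le_left (Ideal.span_singleton_pow_mul_colon_le hx hI hu (n + 1)
    (Ideal.mul_mem_mul (Ideal.mem_span_singleton_self _) hxJ))
  rwa [Ideal.mem_span_singleton, pow_succ', mul_comm (u ^ (n + 1)),
    dvd_cancel_left_mem_nonZeroDivisors hx] at this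

end ReductionNumberOne

section Graded

variable {ι R σ : Type*} [DecidableEq ι] [CommRing R] [SetLike σ R] [AddSubmonoidClass σ R]
  {𝒜 : ι → σ}

theorem Ideal.IsHomogeneous.colon [AddCancelCommMonoid ι] [GradedRing 𝒜] {I J : Ideal R}
    (hI : I.IsHomogeneous 𝒜) (hJ : J.IsHomogeneous 𝒜) :
    (I.colon (J : Set R)).IsHomogeneous 𝒜 := by
  classical
  intro i r hr
  refine Submodule.mem_colon.2 fun g hg => ?_
  rw [smul_eq_mul, ← sum_support_decompose 𝒜 g, Finset.mul_sum]
  refine Ideal.sum_mem _ fun e _ => ?_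
  rw [← coe_decompose_mul_add_of_right_mem 𝒜 (SetLike.coe_mem (decompose 𝒜 g e))]
  exact hI (i + e) (by simpa using Submodule.mem_colon.1 hr _ (hJ e hg))

theorem Ideal.span_pow_le_span_nsmul [AddMonoid ι] [GradedRing 𝒜] (i : ι) (n : ℕ) :
    Ideal.span (𝒜 i : Set R) ^ n ≤ Ideal.span (𝒜 (n • i) : Set R) := by
  induction n with
  | zero =>
    simpa [Ideal.eq_top_iff_one] using Ideal.subset_span (SetLike.GradedOne.one_mem (A := 𝒜))
  | succ n ih =>
    rw [pow_succ, succ_nsmul]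
    refine (Ideal.mul_mono_left ih).trans ?_
    rw [Ideal.span_mul_span']
    exact Ideal.span_mono (Set.mul_subset_iff.2 fun a ha b hb => SetLike.mul_mem_graded ha hb)

theorem Ideal.IsHomogeneous.pow [AddMonoid ι] [GradedRing 𝒜] {I : Ideal R}
    (hI : I.IsHomogeneous 𝒜) (n : ℕ) : (I ^ n).IsHomogeneous 𝒜 := by
  induction n with
  | zero => simpa using Ideal.IsHomogeneous.top 𝒜
  | succ n ih => rw [pow_succ]; exact ih.mul hI

variable [AddCommGroup ι] [LinearOrder ι] [IsOrderedAddMonoid ι] [GradedRing 𝒜]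

theorem eq_zero_of_mem_span_graded_of_lt (hneg : ∀ i < 0, ∀ x ∈ 𝒜 i, x = 0) {d n : ι}
    (hdn : d < n) {x : R} (hxd : x ∈ 𝒜 d) (hxn : x ∈ Ideal.span (𝒜 n : Set R)) : x = 0 := by
  obtain ⟨m, f, g, rfl⟩ := Submodule.mem_span_set'.1 hxn
  rw [← decompose_of_mem_same 𝒜 hxd, decompose_sum, DFinsupp.finsetSum_apply,
    AddSubmonoidClass.coe_finsetSum]
  refine Finset.sum_eq_zero fun j _ => ?_
  rw [smul_eq_mul, ← sub_add_cancel d n, coe_decompose_mul_add_of_right_mem 𝒜 (g j).2,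
    hneg _ (sub_neg.2 hdn) _ (SetLike.coe_mem _), zero_mul]

end Graded

section StandardGraded

variable {k R : Type*} [CommSemiring k] [CommRing R] [Algebra k R] {𝒜 : ℤ → Submodule k R}

theorem mem_span_pow_of_mem_of_standard (hstd : ∀ i : ℤ, 0 ≤ i → 𝒜 (i + 1) = 𝒜 1 * 𝒜 i)
    (d : ℕ) {x : R} (hx : x ∈ 𝒜 d) : x ∈ Ideal.span (𝒜 1 : Set R) ^ d := by
  induction d generalizing x with
  | zero => simp
  | succ d ih =>
    rw [Nat.cast_succ, hstd d d.cast_nonneg] at hx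
    refine Submodule.mul_induction_on hx (fun u hu v hv => ?_) fun _ _ => add_mem
    rw [pow_succ']
    exact Ideal.mul_mem_mul (Ideal.subset_span hu) (ih hv)

end StandardGraded

theorem eq_zero_of_mem_colon_colon_of_lt {R σ : Type*} [CommRing R] [IsReduced R] [SetLike σ R]
    [AddSubmonoidClass σ R] {𝒜 : ℤ → σ} [GradedRing 𝒜] (hneg : ∀ i < 0, ∀ x ∈ 𝒜 i, x = 0)
    {I : Ideal R} {x : R} (hx : x ∈ nonZeroDivisors R) (hI : I * I = Ideal.span {x} * I)
    {t : ℕ} (hxt : x ∈ Ideal.span (𝒜 1 : Set R) ^ t) {i : ℤ} (hit : i < t) {ξ : R}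
    (hξi : ξ ∈ 𝒜 i) (hξ : ξ ∈ (Ideal.span {x}).colon ((Ideal.span {x}).colon I)) :
    ξ = 0 := by
  have hpow : ξ ^ (t + 1) ∈ Ideal.span (𝒜 ((t * t) • (1 : ℤ)) : Set R) := by
    refine Ideal.span_pow_le_span_nsmul 1 (t * t) ?_
    refine Ideal.mem_of_dvd _ (Ideal.pow_dvd_pow_succ_of_mem_colon_colon hx hI hξ t) ?_
    rw [pow_mul]
    exact Ideal.pow_mem_pow hxt t
  have hdeg : (t + 1) • i < (t * t) • (1 : ℤ) := by
    simp only [nsmul_eq_mul]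
    push_cast
    nlinarith
  exact IsNilpotent.eq_zero
    ⟨t + 1, eq_zero_of_mem_span_graded_of_lt hneg hdeg (SetLike.pow_mem_graded _ hξi) hpow⟩

theorem statement_7_general
    {k R : Type*} [Field k] [CommRing R] [Algebra k R] [IsReduced R]
    -- `R` is standard graded over `k`:
    (𝒜 : ℤ → Submodule k R) [GradedAlgebra 𝒜]
    (hneg : ∀ i : ℤ, i < 0 → 𝒜 i = ⊥)
    (hstd : ∀ i : ℤ, 0 ≤ i → 𝒜 (i + 1) = 𝒜 1 * 𝒜 i)
    -- `𝔪` is the homogeneous maximal ideal: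
    (𝔪 : Ideal R) (h𝔪 : 𝔪 = Ideal.span (𝒜 1 : Set R))
    -- `y` is a linear nonzerodivisor parameter (this encodes that `R` is Cohen–Macaulay):
    (y : R) (hy1 : y ∈ 𝒜 1) (hynzd : y ∈ nonZeroDivisors R)
    -- `a` is the `a`-invariant of `R`, characterized by the reduction number `r_(y)(𝔪) = a + 1`:
    (a : ℤ)
    (hred : ∀ n : ℤ, a + 1 ≤ n → ipow 𝔪 (n + 1) = Ideal.span {y} * ipow 𝔪 n) :
    ipow 𝔪 (a + 1) =
      Submodule.colon (Ideal.span {y ^ (a + 1).toNat})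
        (Submodule.colon (Ideal.span {y ^ (a + 1).toNat}) (ipow 𝔪 (a + 1))) := by
  subst h𝔪
  set t := (a + 1).toNat
  set 𝔪 := Ideal.span (𝒜 1 : Set R)
  have hneg' : ∀ i < 0, ∀ x ∈ 𝒜 i, x = 0 := fun i hi x hx => by simpa [hneg i hi] using hx
  have hsq : 𝔪 ^ t * 𝔪 ^ t = Ideal.span {y ^ t} * 𝔪 ^ t := by
    refine (pow_add _ _ _).symm.trans (Ideal.pow_add_eq_span_singleton_pow_mul (fun s hs => ?_) t)
    simpa [ipow] using hred s (Int.self_le_toNat _ |>.trans (by exact_mod_cast hs))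
  have h𝔪 : 𝔪.IsHomogeneous 𝒜 := Ideal.homogeneous_span 𝒜 _ fun x hx => ⟨1, hx⟩
  have hQ : (Ideal.span {y ^ t}).IsHomogeneous 𝒜 :=
    Ideal.homogeneous_span 𝒜 _ fun x hx => ⟨t • 1, hx ▸ SetLike.pow_mem_graded t hy1⟩
  have hcolon := hQ.colon (hQ.colon (h𝔪.pow t))
  refine le_antisymm (Ideal.le_colon_colon _) fun ξ hξ => (h𝔪.pow t).mem_iff.2 fun i => ?_
  rcases le_or_gt (t : ℤ) i with hti | hit
  · refine Ideal.pow_le_pow_right (by omega) (mem_span_pow_of_mem_of_standard hstd i.toNat ?_)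
    rw [Int.toNat_of_nonneg (by omega)]
    exact SetLike.coe_mem _
  · rw [eq_zero_of_mem_colon_colon_of_lt hneg' (pow_mem hynzd t) hsq
      (Ideal.pow_mem_pow (Ideal.subset_span hy1) t) hit (SetLike.coe_mem _) (hcolon i hξ)]
    exact zero_mem _

/-- **Proposition 2.6 (key step)**: Let `R` be a reduced one-dimensional standard graded
Cohen–Macaulay `k`-algebra with `a`-invariant `a` and `y` a linear parameter.  Then
`𝔪^(a+1) = (y^(a+1)) : ((y^(a+1)) : 𝔪^(a+1))`. -/
theorem statement_7
    {k R : Type*} [Field k] [CommRing R] [Algebra k R] [IsNoetherianRing R] [IsReduced R]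
    -- `R` is standard graded over `k`:
    (𝒜 : ℤ → Submodule k R) [GradedAlgebra 𝒜]
    (hneg : ∀ i : ℤ, i < 0 → 𝒜 i = ⊥)
    (hstd : ∀ i : ℤ, 0 ≤ i → 𝒜 (i + 1) = 𝒜 1 * 𝒜 i)
    -- of dimension one:
    (hdim : ringKrullDim R = 1)
    -- `𝔪` is the homogeneous maximal ideal:
    (𝔪 : Ideal R) (h𝔪 : 𝔪 = Ideal.span (𝒜 1 : Set R))
    -- `y` is a linear nonzerodivisor parameter (this encodes that `R` is Cohen–Macaulay):
    (y : R) (hy1 : y ∈ 𝒜 1) (hynzd : y ∈ nonZeroDivisors R)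
    (hsop : 𝔪 ≤ (Ideal.span {y}).radical)
    -- `a` is the `a`-invariant of `R`, characterized by the reduction number `r_(y)(𝔪) = a + 1`:
    (a : ℤ) (ha : 0 ≤ a + 1)
    (hred : ∀ n : ℤ, a + 1 ≤ n → ipow 𝔪 (n + 1) = Ideal.span {y} * ipow 𝔪 n)
    (hmin : ¬ ipow 𝔪 (a + 1) = Ideal.span {y} * ipow 𝔪 a) :
    ipow 𝔪 (a + 1) =
      Submodule.colon (Ideal.span {y ^ (a + 1).toNat})
        (Submodule.colon (Ideal.span {y ^ (a + 1).toNat}) (ipow 𝔪 (a + 1))) :=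
  statement_7_general 𝒜 hneg hstd 𝔪 h𝔪 y hy1 hynzd a hred
end

section
/- Let R be a standard graded Cohen–Macaulay k-algebra of dimension d ≥ 1 with canonical module ω, a-invariant a, and J generated by a linear system of parameters. For every i and j ≥ a+d, if the colon ideal J^i : 𝔪^j is generated in a single degree, then J^i : 𝔪^j = 𝔪^{i-j+a+d}. -/
open DirectSum

namespace Ideal

variable {R : Type*} [CommRing R]

lemma sup_pow_add_add_one_le (I J : Ideal R) (n m : ℕ) :
    (I ⊔ J) ^ (n + m + 1) ≤ I ^ (n + 1) ⊔ J ^ (m + 1) := by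
  rw [← add_eq_sup, ← add_eq_sup, add_pow, sum_eq_sup]
  refine Finset.sup_le fun l _ => ?_
  rcases le_or_gt (n + 1) l with hn | hn
  · exact mul_le_left.trans (mul_le_left.trans ((pow_le_pow_right hn).trans le_sup_left))
  · have hm : m + 1 ≤ n + m + 1 - l := by lia
    exact mul_le_left.trans (mul_le_right.trans ((pow_le_pow_right hm).trans le_sup_right))

/-- Pigeonhole: a product of `card ι * n + 1` generators repeats one of them `n + 1` times. -/
lemma span_range_pow_le_span_range_pow {ι : Type*} [Fintype ι] (y : ι → R) (n : ℕ) :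
    span (Set.range y) ^ (Fintype.card ι * n + 1) ≤ span (Set.range fun t => y t ^ (n + 1)) := by
  classical
  suffices ∀ T : Finset ι, span (y '' T) ^ (T.card * n + 1) ≤ span ((y · ^ (n + 1)) '' T) by
    simpa [Set.image_univ] using this Finset.univ
  intro T
  induction T using Finset.induction_on with
  | empty => simp
  | insert b T hb ih =>
    rw [Finset.coe_insert, Set.image_insert_eq, Set.image_insert_eq, span_insert, span_insert,
      Finset.card_insert_of_notMem hb, show (T.card + 1) * n + 1 = n + T.card * n + 1 by ring,
      ← span_singleton_pow]
    exact (sup_pow_add_add_one_le _ _ _ _).trans (sup_le_sup_left ih _)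

lemma le_colon_iff_mul_le {I K L : Ideal R} : K ≤ I.colon (L : Set R) ↔ K * L ≤ I := by
  refine ⟨fun h => mul_le.2 fun r hr l hl => ?_, fun h r hr => ?_⟩
  · exact Submodule.mem_colon.1 (h hr) l hl
  · exact Submodule.mem_colon.2 fun l hl => h (mul_mem_mul hr hl)

end Ideal

lemma span_smul_top_induction {R M : Type*} [CommRing R] [AddCommGroup M] [Module R M]
    {S : Set R} {P : M → Prop} (zero : P 0) (add : ∀ x y, P x → P y → P (x + y))
    (gen : ∀ g ∈ S, ∀ u, P (g • u)) {x : M} (hx : x ∈ Ideal.span S • (⊤ : Submodule R M)) :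
    P x := by
  suffices ∀ r ∈ Ideal.span S, ∀ u, P (r • u) from
    Submodule.smul_induction_on hx (fun r hr u _ => this r hr u) add
  intro r hr
  induction hr using Submodule.span_induction with
  | mem g hg => exact gen g hg
  | zero => simpa using zero
  | add r r' _ _ h h' => exact fun u => add_smul r r' u ▸ add _ _ (h u) (h' u)
  | smul b r _ h => exact fun u => by rw [smul_eq_mul, mul_comm, mul_smul]; exact h _

lemma RingTheory.Sequence.IsWeaklyRegular.isSMulRegular_ofFn_zero {R M : Type*} [CommRing R]
    [AddCommGroup M] [Module R M] {d : ℕ} {y : Fin d → R}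
    (h : IsWeaklyRegular M (List.ofFn y)) (hd : 0 < d) : IsSMulRegular M (y ⟨0, hd⟩) := by
  obtain _ | d := d
  · omega
  rw [List.ofFn_succ, isWeaklyRegular_cons_iff] at h
  exact h.1

section ipow

variable {R : Type*} [CommRing R]

@[simp] lemma ipow_natCast (I : Ideal R) (n : ℕ) : ipow I n = I ^ n := by simp [ipow]

@[simp] lemma ipow_one (I : Ideal R) : ipow I 1 = I := by simp [ipow]

lemma ipow_of_nonpos (I : Ideal R) {n : ℤ} (hn : n ≤ 0) : ipow I n = ⊤ := by
  simp [ipow, Int.toNat_of_nonpos hn]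

lemma ipow_antitone (I : Ideal R) : Antitone (ipow I) :=
  fun _ _ h => Ideal.pow_le_pow_right (Int.toNat_le_toNat h)

lemma ipow_mul_ipow_le (I : Ideal R) (m n : ℤ) : ipow I m * ipow I n ≤ ipow I (m + n) := by
  rw [ipow, ipow, ← pow_add]
  exact Ideal.pow_le_pow_right (by omega)

def IsReduction (J 𝔪 : Ideal R) (r : ℤ) : Prop :=
  ∀ n, r ≤ n → ipow 𝔪 (n + 1) = J * ipow 𝔪 n

variable {𝔪 J : Ideal R} {r : ℤ}

lemma ipow_add_natCast_eq_pow_mul (hred : IsReduction J 𝔪 r) {c : ℤ} (hc : r ≤ c) (k : ℕ) :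
    ipow 𝔪 (c + k) = J ^ k * ipow 𝔪 c := by
  induction k with
  | zero => simp
  | succ k ih =>
    rw [Nat.cast_succ, ← add_assoc, hred _ (by omega), ih, pow_succ', mul_assoc]

lemma ipow_le_colon (hred : IsReduction J 𝔪 r) (i j : ℤ) :
    ipow 𝔪 (i - j + r) ≤ (ipow J i).colon (ipow 𝔪 j : Set R) := by
  rcases le_or_gt i 0 with hi | hi
  · simp [ipow_of_nonpos J hi, Submodule.top_colon]
  rw [Ideal.le_colon_iff_mul_le]
  calc ipow 𝔪 (i - j + r) * ipow 𝔪 j ≤ ipow 𝔪 (r + i.toNat) :=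
        (ipow_mul_ipow_le _ _ _).trans (le_of_eq (by congr 1; omega))
    _ = J ^ i.toNat * ipow 𝔪 r := ipow_add_natCast_eq_pow_mul hred le_rfl _
    _ ≤ J ^ i.toNat := Ideal.mul_le_left

lemma ipow_mul_colon_le (hred : IsReduction J 𝔪 r) {j : ℤ} (hj : r ≤ j) (i : ℤ) (k : ℕ) :
    ipow 𝔪 (j + k) * (ipow J i).colon (ipow 𝔪 j : Set R) ≤ J ^ (k + i.toNat) := by
  rw [ipow_add_natCast_eq_pow_mul hred hj, mul_assoc, pow_add]
  exact Ideal.mul_mono_right ((mul_comm _ _).trans_le (Ideal.le_colon_iff_mul_le.1 le_rfl))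

end ipow

section GradedRing

variable {k R : Type*} [Field k] [CommRing R] [Algebra k R] {𝒜 : ℤ → Submodule k R}

lemma mem_ipow_of_mem_graded (hstd : ∀ i : ℤ, 0 ≤ i → 𝒜 (i + 1) = 𝒜 1 * 𝒜 i)
    {𝔪 : Ideal R} (h𝔪 : ∀ x ∈ 𝒜 1, x ∈ 𝔪) {c : ℤ} {x : R} (hx : x ∈ 𝒜 c) :
    x ∈ ipow 𝔪 c := by
  rcases le_or_gt c 0 with hc | hc
  · simp [ipow_of_nonpos 𝔪 hc]
  lift c to ℕ using hc.le
  rw [ipow_natCast]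
  clear hc
  induction c generalizing x with
  | zero => simp
  | succ c ih =>
    rw [Nat.cast_succ, hstd c (by omega)] at hx
    refine Submodule.mul_induction_on hx (fun g hg z hz => ?_) (fun _ _ => add_mem)
    exact pow_succ' 𝔪 c ▸ Ideal.mul_mem_mul (h𝔪 g hg) (ih hz)

lemma mem_span_graded_mul_span_of_mem_span_inter [GradedAlgebra 𝒜] {S : Set R} {q t : ℤ} {x : R}
    (hx : x ∈ 𝒜 q) (hxS : x ∈ Ideal.span (S ∩ 𝒜 t)) :
    x ∈ Ideal.span (𝒜 (q - t)) * Ideal.span S := by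
  classical
  obtain ⟨c, hc, hcx⟩ := Submodule.mem_span_set.1 hxS
  rw [← decompose_of_mem_same 𝒜 hx, ← hcx, Finsupp.sum, decompose_sum, DFinsupp.finsetSum_apply,
    Submodule.coe_sum]
  refine Ideal.sum_mem _ fun z hz => ?_
  obtain ⟨hzS, hzt⟩ := hc hz
  have hdec := coe_decompose_mul_add_of_right_mem 𝒜 (a := c z) (i := q - t) hzt
  rw [sub_add_cancel] at hdec
  rw [smul_eq_mul, hdec]
  exact Ideal.mul_mem_mul (Ideal.subset_span (SetLike.coe_mem _)) (Ideal.subset_span hzS)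

lemma mem_mul_of_eq_span_inter_graded_of_lt [GradedAlgebra 𝒜]
    (hstd : ∀ i : ℤ, 0 ≤ i → 𝒜 (i + 1) = 𝒜 1 * 𝒜 i) {𝔪 : Ideal R} (h𝔪 : ∀ x ∈ 𝒜 1, x ∈ 𝔪)
    {I : Ideal R} {t q : ℤ} (hI : I = Ideal.span (I ∩ 𝒜 t)) (htq : t < q) {x : R}
    (hx : x ∈ 𝒜 q) (hxI : x ∈ I) : x ∈ 𝔪 * I := by
  rw [hI] at hxI
  have hx' := mem_span_graded_mul_span_of_mem_span_inter hx hxI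
  rw [Ideal.span_eq] at hx'
  refine Ideal.mul_mono_left (Ideal.span_le.2 fun z hz => ?_) hx'
  exact ipow_one 𝔪 ▸ ipow_antitone 𝔪 (by omega) (mem_ipow_of_mem_graded hstd h𝔪 hz)

end GradedRing

section GradedModule

variable {k R ω : Type*} [Field k] [CommRing R] [AddCommGroup ω] [Module R ω] [Module k ω]

def SocleConcentratedIn (𝔪 : Ideal R) (N : Submodule R ω) (w : ℤ → Submodule k ω) (D : ℤ) :
    Prop :=
  ∀ x : ω, (∀ m ∈ 𝔪, m • x ∈ N) → ∃ u ∈ N, ∃ v ∈ w D, x = u + v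

variable {w : ℤ → Submodule k ω} [Decomposition w] {𝔪 : Ideal R} {N : Submodule R ω} {D : ℤ}

lemma mem_of_forall_smul_mem (hN : N.IsHomogeneous w) (hsoc : SocleConcentratedIn 𝔪 N w D)
    {p : ℤ} (hp : p ≠ D) {x : ω} (hx : x ∈ w p) (h𝔪x : ∀ m ∈ 𝔪, m • x ∈ N) : x ∈ N := by
  obtain ⟨u, hu, v, hv, hxuv⟩ := hsoc x h𝔪x
  rw [← decompose_of_mem_same w hx, hxuv, decompose_add, DirectSum.add_apply, Submodule.coe_add,
    decompose_of_mem_ne w hv hp.symm, add_zero]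
  exact hN p hu

variable [Module k R] {𝒜 : ℤ → Submodule k R} [SetLike.GradedSMul 𝒜 w]

lemma coe_decompose_smul_of_mem {c : ℤ} {r : R} (hr : r ∈ 𝒜 c) (x : ω) (p : ℤ) :
    (decompose w (r • x) p : ω) = r • (decompose w x (p - c) : ω) := by
  induction x using Decomposition.inductionOn w with
  | zero => simp
  | @homogeneous q m =>
    have hrm : r • (m : ω) ∈ w (c + q) := SetLike.GradedSMul.smul_mem hr m.2
    by_cases hp : c + q = p
    · rw [← hp, decompose_of_mem_same w hrm, add_sub_cancel_left, decompose_of_mem_same w m.2]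
    · rw [decompose_of_mem_ne w hrm hp, decompose_of_mem_ne w m.2 (by omega), smul_zero]
  | add x x' hx hx' => simp [decompose_add, hx, hx', smul_add]

variable (w) in
lemma isHomogeneous_span_smul_top {S : Set R} {c : ℤ} (hS : S ⊆ 𝒜 c) :
    (Ideal.span S • ⊤ : Submodule R ω).IsHomogeneous w := by
  intro p x hx
  refine span_smul_top_induction (P := fun x => (decompose w x p : ω) ∈ Ideal.span S • ⊤)
    (by simp) (fun x y hx hy => ?_) (fun g hg u => ?_) hx
  · simpa [decompose_add] using add_mem hx hy
  · rw [coe_decompose_smul_of_mem (hS hg)]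
    exact Submodule.smul_mem_smul (Ideal.subset_span hg) Submodule.mem_top

lemma decompose_eq_zero_of_mem_span_smul_top {S : Set R} {c b : ℤ} (hS : S ⊆ 𝒜 c)
    (hw : ∀ p < b, w p = ⊥) {x : ω} (hx : x ∈ Ideal.span S • (⊤ : Submodule R ω)) {p : ℤ}
    (hp : p < c + b) : (decompose w x p : ω) = 0 := by
  refine span_smul_top_induction (P := fun x => (decompose w x p : ω) = 0)
    (by simp) (fun x y hx hy => by simp [decompose_add, hx, hy]) (fun g hg u => ?_) hx
  have hu : (decompose w u (p - c) : ω) ∈ (⊥ : Submodule k ω) :=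
    hw (p - c) (by omega) ▸ (decompose w u (p - c)).2
  rw [coe_decompose_smul_of_mem (hS hg), (Submodule.mem_bot k).1 hu, smul_zero]

/-- Multiply `x` by linear forms for as long as the product stays outside `N`; since a power of
`𝔪` pushes `x` into `N`, this stops, and by the socle condition it can only stop in degree `D`. -/
lemma exists_smul_notMem_of_pow_smul_mem [SetLike.GradedMonoid 𝒜] (hN : N.IsHomogeneous w)
    (hsoc : SocleConcentratedIn 𝔪 N w D) (h𝔪 : 𝔪 = Ideal.span (𝒜 1)) (n : ℕ) {p : ℤ} {x : ω}
    (hx : x ∈ w p) (hxN : x ∉ N) (hnx : ∀ m ∈ 𝔪 ^ n, m • x ∈ N) :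
    ∃ μ ∈ 𝒜 (D - p), μ • x ∉ N := by
  induction n generalizing p x with
  | zero => exact absurd (by simpa using hnx 1 (by simp)) hxN
  | succ n ih =>
    by_cases hlin : ∀ g ∈ 𝒜 1, g • x ∈ N
    · have h𝔪x : ∀ m ∈ 𝔪, m • x ∈ N := fun m hm =>
        Submodule.mem_colon_singleton.1 <| (Ideal.span_le.2 fun g hg =>
          Submodule.mem_colon_singleton.2 (hlin g hg)) (h𝔪 ▸ hm)
      by_cases hp : p = D
      · exact ⟨1, by simpa [hp] using SetLike.one_mem_graded 𝒜, by simpa using hxN⟩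
      · exact absurd (mem_of_forall_smul_mem hN hsoc hp hx h𝔪x) hxN
    · push Not at hlin
      obtain ⟨g, hg, hgx⟩ := hlin
      obtain ⟨μ, hμ, hμx⟩ := ih (SetLike.GradedSMul.smul_mem hg hx) hgx fun m hm => by
        rw [smul_smul]
        exact hnx _ (pow_succ 𝔪 n ▸ Ideal.mul_mem_mul hm (h𝔪 ▸ Ideal.subset_span hg))
      refine ⟨μ * g, ?_, by rwa [mul_smul]⟩
      convert SetLike.mul_mem_graded hμ hg using 2
      rw [vadd_eq_add]
      ring

end GradedModule

theorem pow_notMem_mul_colon {k R ω : Type*} [Field k] [CommRing R] [Algebra k R]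
    {𝒜 : ℤ → Submodule k R} [GradedAlgebra 𝒜] (hstd : ∀ i : ℤ, 0 ≤ i → 𝒜 (i + 1) = 𝒜 1 * 𝒜 i)
    {𝔪 : Ideal R} (h𝔪 : 𝔪 = Ideal.span (𝒜 1)) {d : ℕ} (hd : 1 ≤ d) {y : Fin d → R}
    (hy1 : ∀ t, y t ∈ 𝒜 1) {a : ℤ}
    (hred : IsReduction (Ideal.span (Set.range y)) 𝔪 (a + d)) [AddCommGroup ω] [Module R ω]
    [Module k ω] {w : ℤ → Submodule k ω} [Decomposition w] [SetLike.GradedSMul 𝒜 w]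
    (hbelow : ∀ p : ℤ, p < -a → w p = ⊥)
    (hsoc : ∀ n : ℕ, SocleConcentratedIn 𝔪
      (Ideal.span (Set.range fun t => y t ^ n) • (⊤ : Submodule R ω)) w (n * d))
    {e : ω} (he : e ∈ w (-a)) (he0 : e ≠ 0) {y₀ : R} (hy₀ : y₀ ∈ 𝒜 1)
    (hy₀e : IsSMulRegular ω y₀) {i : ℕ} {j : ℤ} (hj : a + d ≤ j) {s : ℕ}
    (hs : (s : ℤ) = i - j + a + d) :
    y₀ ^ s ∉ 𝔪 * (ipow (Ideal.span (Set.range y)) i).colon (ipow 𝔪 j : Set R) := by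
  set J := Ideal.span (Set.range y)
  set N := Ideal.span (Set.range fun t => y t ^ (i + 1)) • (⊤ : Submodule R ω)
  have hJN : ∀ r ∈ J ^ (d * i + 1), ∀ x : ω, r • x ∈ N := by
    have := Ideal.span_range_pow_le_span_range_pow y i
    rw [Fintype.card_fin] at this
    exact fun r hr _ => Submodule.smul_mem_smul (this hr) Submodule.mem_top
  have hgen : Set.range (fun t => y t ^ (i + 1)) ⊆ 𝒜 (i + 1 : ℕ) := by
    rintro _ ⟨t, rfl⟩
    simpa using SetLike.pow_mem_graded (i + 1) (hy1 t)
  have hx : y₀ ^ s • e ∈ w (s + -a) :=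
    SetLike.GradedSMul.smul_mem (by simpa using SetLike.pow_mem_graded s hy₀) he
  -- `N` lives in degrees `≥ i + 1 - a`, above the degree `s - a` of `y₀ ^ s • e`
  have hxN : y₀ ^ s • e ∉ N := fun hxN => he0 <| hy₀e.pow s <| by
    change y₀ ^ s • e = y₀ ^ s • (0 : ω)
    rw [smul_zero, ← decompose_of_mem_same w hx]
    exact decompose_eq_zero_of_mem_span_smul_top hgen hbelow hxN (by push_cast; omega)
  have h𝔪N : ∀ m ∈ ipow 𝔪 (a + d + (d * i + 1 : ℕ)), m • (y₀ ^ s • e) ∈ N := fun m hm => by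
    rw [ipow_add_natCast_eq_pow_mul hred le_rfl] at hm
    exact hJN m (Ideal.mul_le_left hm) _
  obtain ⟨μ, hμ, hμx⟩ := exists_smul_notMem_of_pow_smul_mem
    (isHomogeneous_span_smul_top w hgen) (hsoc (i + 1)) h𝔪 _ hx hxN h𝔪N
  refine fun hy => hμx (smul_smul μ (y₀ ^ s) e ▸ hJN _ ?_ e)
  set C := (ipow J i).colon (ipow 𝔪 j : Set R)
  set q : ℤ := (i + 1 : ℕ) * d - (s + -a) with hq_def
  have hq : q + 1 = j + ((d - 1) * i + 1 : ℕ) := by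
    rw [hq_def, hs]; push_cast [Nat.cast_sub hd]; ring
  have hμy : μ * y₀ ^ s ∈ ipow 𝔪 q * ipow 𝔪 1 * C := by
    rw [ipow_one, mul_assoc]
    refine Ideal.mul_mem_mul (mem_ipow_of_mem_graded hstd (fun _ hg => ?_) hμ) hy
    exact h𝔪 ▸ Ideal.subset_span hg
  refine (?_ : _ ≤ J ^ (d * i + 1)) hμy
  calc ipow 𝔪 q * ipow 𝔪 1 * C
      ≤ ipow 𝔪 (j + ((d - 1) * i + 1 : ℕ)) * C := Ideal.mul_mono_left (hq ▸ ipow_mul_ipow_le ..)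
    _ ≤ J ^ ((d - 1) * i + 1 + (i : ℤ).toNat) := ipow_mul_colon_le hred hj i _
    _ = J ^ (d * i + 1) := by rw [Int.toNat_natCast]; congr 1; zify [hd]; ring

theorem statement_12_general
    {k R : Type*} [Field k] [CommRing R] [Algebra k R]
    -- `R` is standard graded over `k`:
    (𝒜 : ℤ → Submodule k R) [GradedAlgebra 𝒜]
    (hstd : ∀ i : ℤ, 0 ≤ i → 𝒜 (i + 1) = 𝒜 1 * 𝒜 i)
    -- of dimension `d ≥ 1`:
    (d : ℕ) (hd : 1 ≤ d)
    -- `𝔪` is the homogeneous maximal ideal: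
    (𝔪 : Ideal R) (h𝔪 : 𝔪 = Ideal.span (𝒜 1 : Set R))
    -- `y` is a linear system of parameters; its regularity encodes that `R` is Cohen–Macaulay:
    (y : Fin d → R) (hy1 : ∀ t, y t ∈ 𝒜 1)
    (J : Ideal R) (hJ : J = Ideal.span (Set.range y))
    -- the `a`-invariant (the negative of the initial degree of the canonical module `ω`):
    (a : ℤ)
    -- `J` is a reduction of `𝔪` with reduction number `a + d`:
    (hred : ∀ n : ℤ, a + d ≤ n → ipow 𝔪 (n + 1) = J * ipow 𝔪 n)
    -- `ω` is the graded canonical module of `R`: a finitely generated faithful graded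
    -- maximal Cohen–Macaulay module with initial degree `-a`, generated in degrees `≤ d`,
    -- whose Artinian reductions `ω/J^{[n]}ω` have socle concentrated in degree `n·d`:
    {ω : Type*} [AddCommGroup ω] [Module R ω] [Module k ω]
    (w : ℤ → Submodule k ω)
    (hwint : DirectSum.IsInternal w)
    (hwsmul : ∀ (p q : ℤ), ∀ r ∈ 𝒜 p, ∀ x ∈ w q, r • x ∈ w (p + q))
    (hbelow : ∀ p : ℤ, p < -a → w p = ⊥)
    (hinit : w (-a) ≠ ⊥)
    (hregw : RingTheory.Sequence.IsRegular ω (List.ofFn y))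
    (hsoc : ∀ n : ℕ, ∀ x : ω,
      (∀ m ∈ 𝔪, m • x ∈ (Ideal.span (Set.range fun t => y t ^ n)) • (⊤ : Submodule R ω)) →
      ∃ u ∈ (Ideal.span (Set.range fun t => y t ^ n)) • (⊤ : Submodule R ω),
        ∃ v ∈ w ((n : ℤ) * d), x = u + v)
    (i j : ℤ) (hj : a + d ≤ j)
    (hone : ∃ t : ℤ, Submodule.colon (ipow J i) (ipow 𝔪 j)
        = Ideal.span ((Submodule.colon (ipow J i) (ipow 𝔪 j) : Set R) ∩ (𝒜 t : Set R))) :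
    Submodule.colon (ipow J i) (ipow 𝔪 j) = ipow 𝔪 (i - j + a + d) := by
  let := hwint.chooseDecomposition
  have : SetLike.GradedSMul 𝒜 w := ⟨fun p q _ _ hr hx => hwsmul p q _ hr _ hx⟩
  have h𝔪1 : ∀ x ∈ 𝒜 1, x ∈ 𝔪 := fun _ hx => h𝔪 ▸ Ideal.subset_span hx
  subst hJ
  have hle : ipow 𝔪 (i - j + a + d) ≤ (ipow (Ideal.span (Set.range y)) i).colon (ipow 𝔪 j) := by
    simpa only [add_assoc] using ipow_le_colon hred i j
  refine le_antisymm ?_ hle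
  obtain ⟨t, ht⟩ := hone
  rcases le_or_gt (i - j + a + d) 0 with hs | hs
  · exact (ipow_of_nonpos 𝔪 hs).symm ▸ le_top
  have hts : i - j + a + d ≤ t := by
    by_contra! hts
    lift i to ℕ using (by omega)
    obtain ⟨s, hs⟩ : ∃ s : ℕ, (s : ℤ) = i - j + a + d := ⟨_, Int.toNat_of_nonneg hs.le⟩
    obtain ⟨e, he, he0⟩ := (Submodule.ne_bot_iff _).1 hinit
    refine pow_notMem_mul_colon hstd h𝔪 hd hy1 hred hbelow hsoc he he0 (hy1 _)
      (hregw.toIsWeaklyRegular.isSMulRegular_ofFn_zero hd) hj hs ?_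
    refine mem_mul_of_eq_span_inter_graded_of_lt hstd h𝔪1 ht (hs ▸ hts)
      (by simpa using SetLike.pow_mem_graded s (hy1 ⟨0, hd⟩)) ?_
    exact hle (hs ▸ by simpa using Ideal.pow_mem_pow (h𝔪1 _ (hy1 ⟨0, hd⟩)) s)
  rw [ht]
  exact Ideal.span_le.2 fun x hx => ipow_antitone 𝔪 hts (mem_ipow_of_mem_graded hstd h𝔪1 hx.2)

/-- **Corollary 2.14**: for every `i` and `j ≥ a + d`, if the colon ideal `J^i : 𝔪^j` is
generated in a single degree then `J^i : 𝔪^j = 𝔪^(i-j+a+d)`. -/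
theorem statement_12
    {k R : Type*} [Field k] [CommRing R] [Algebra k R] [IsNoetherianRing R]
    -- `R` is standard graded over `k`:
    (𝒜 : ℤ → Submodule k R) [GradedAlgebra 𝒜]
    (hneg : ∀ i : ℤ, i < 0 → 𝒜 i = ⊥)
    (hstd : ∀ i : ℤ, 0 ≤ i → 𝒜 (i + 1) = 𝒜 1 * 𝒜 i)
    -- of dimension `d ≥ 1`:
    (d : ℕ) (hd : 1 ≤ d) (hdim : ringKrullDim R = d)
    -- `𝔪` is the homogeneous maximal ideal:
    (𝔪 : Ideal R) (h𝔪 : 𝔪 = Ideal.span (𝒜 1 : Set R))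
    -- `y` is a linear system of parameters; its regularity encodes that `R` is Cohen–Macaulay:
    (y : Fin d → R) (hy1 : ∀ t, y t ∈ 𝒜 1)
    (hyreg : RingTheory.Sequence.IsRegular R (List.ofFn y))
    (J : Ideal R) (hJ : J = Ideal.span (Set.range y))
    (hsop : 𝔪 ≤ J.radical)
    -- the `a`-invariant (the negative of the initial degree of the canonical module `ω`):
    (a : ℤ) (ha : 0 ≤ a + d)
    -- `J` is a reduction of `𝔪` with reduction number `a + d`:
    (hred : ∀ n : ℤ, a + d ≤ n → ipow 𝔪 (n + 1) = J * ipow 𝔪 n)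
    -- `ω` is the graded canonical module of `R`: a finitely generated faithful graded
    -- maximal Cohen–Macaulay module with initial degree `-a`, generated in degrees `≤ d`,
    -- whose Artinian reductions `ω/J^{[n]}ω` have socle concentrated in degree `n·d`:
    {ω : Type*} [AddCommGroup ω] [Module R ω] [Module k ω] [IsScalarTower k R ω]
    (w : ℤ → Submodule k ω)
    (hwint : DirectSum.IsInternal w)
    (hwsmul : ∀ (p q : ℤ), ∀ r ∈ 𝒜 p, ∀ x ∈ w q, r • x ∈ w (p + q))
    [Module.Finite R ω]
    (hfaith : Module.annihilator R ω = ⊥)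
    (hbelow : ∀ p : ℤ, p < -a → w p = ⊥)
    (hinit : w (-a) ≠ ⊥)
    (hgend : Submodule.span R (⋃ p : ℤ, ⋃ (_ : p ≤ (d : ℤ)), (w p : Set ω)) = ⊤)
    (hregw : RingTheory.Sequence.IsRegular ω (List.ofFn y))
    (hsoc : ∀ n : ℕ, ∀ x : ω,
      (∀ m ∈ 𝔪, m • x ∈ (Ideal.span (Set.range fun t => y t ^ n)) • (⊤ : Submodule R ω)) →
      ∃ u ∈ (Ideal.span (Set.range fun t => y t ^ n)) • (⊤ : Submodule R ω),
        ∃ v ∈ w ((n : ℤ) * d), x = u + v)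
    (i j : ℤ) (hj : a + d ≤ j)
    (hone : ∃ t : ℤ, Submodule.colon (ipow J i) (ipow 𝔪 j)
        = Ideal.span ((Submodule.colon (ipow J i) (ipow 𝔪 j) : Set R) ∩ (𝒜 t : Set R))) :
    Submodule.colon (ipow J i) (ipow 𝔪 j) = ipow 𝔪 (i - j + a + d) :=
  statement_12_general 𝒜 hstd d hd 𝔪 h𝔪 y hy1 J hJ a hred w hwint hwsmul hbelow hinit hregw hsoc i j
    hj hone
end

section
/- Let R be a one-dimensional reduced standard graded Cohen–Macaulay k-algebra with a-invariant a, y a linear parameter, K the total ring of quotients, and let B be any non-negatively graded Noetherian ring with R[𝔪/y] ⊆ B ⊆ K that is a finite R[𝔪/y]-module. Then B = R[𝔪/y], and for every i ≥ j and j ≥ a+1 one has (y^i) :_R 𝔪^j = y^{i-j}(R :_K B) = 𝔪^{i-j}(R :_K B). -/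
/-- The fractional ideal `𝔪/y = {z ∈ K | z·y ∈ 𝔪}` inside the total quotient ring. -/
def mOverY {R K : Type*} [CommRing R] [CommRing K] [Algebra R K] (𝔪 : Ideal R) (y : R) :
    Set K := {z : K | ∃ m ∈ 𝔪, z * algebraMap R K y = algebraMap R K m}

/-- The conductor `R :_K B = {z ∈ K | z·B ⊆ R}` as an `R`-submodule of `K`. -/
def conductorSet {R K : Type*} [CommRing R] [CommRing K] [Algebra R K] (B : Set K) :
    Submodule R K where
  carrier := {z | ∀ b ∈ B, ∃ r : R, z * b = algebraMap R K r}
  add_mem' := by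
    intro x y hx hy b hb
    obtain ⟨r, hr⟩ := hx b hb
    obtain ⟨s, hs⟩ := hy b hb
    exact ⟨r + s, by rw [add_mul, hr, hs, map_add]⟩
  zero_mem' := fun b hb => ⟨0, by rw [zero_mul, map_zero]⟩
  smul_mem' := by
    intro c x hx b hb
    obtain ⟨r, hr⟩ := hx b hb
    exact ⟨c * r, by rw [Algebra.smul_def, mul_assoc, hr, map_mul]⟩

/-!
Since `y` is a unit of `K`, every `m ∈ 𝔪ⁿ` gives `m / yⁿ ∈ R[𝔪/y]`. Conversely, because
`𝔪ⁿ⁺¹ = y 𝔪ⁿ` for `n ≥ a + 1`, every element of `R[𝔪/y]` is `t / yⁿ` with `t ∈ 𝔪ⁿ` for any such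
`n`, so `R[𝔪/y] = 𝔪ⁿ / yⁿ`. An element of `K` of non-negative degree is `r / yⁿ` with `r` of degree
at least `n`, hence `r ∈ 𝔪ⁿ`, so `B ⊆ R[𝔪/y]`. Finally `z 𝔪ʲ ⊆ yⁱ R` says exactly that `z / yⁱ⁻ʲ`
maps `𝔪ʲ / yʲ = R[𝔪/y]` into `R`; and since the conductor is an `R[𝔪/y]`-module and
`𝔪 ⊆ y R[𝔪/y]`, the ideals `𝔪ⁱ⁻ʲ` and `(yⁱ⁻ʲ)` act on it in the same way.
-/

theorem pow_add_eq_pow_mul_of_pow_succ_eq {M : Type*} [Monoid M] {a b : M} {c : ℕ}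
    (h : ∀ n, c ≤ n → a ^ (n + 1) = b * a ^ n) {n : ℕ} (hn : c ≤ n) (d : ℕ) :
    a ^ (n + d) = b ^ d * a ^ n := by
  induction d with
  | zero => simp
  | succ d ih => rw [← add_assoc, h _ (by omega), ih, pow_succ', mul_assoc]

theorem grade_subset_span_pow {k R : Type*} [CommSemiring k] [CommSemiring R] [Algebra k R]
    {𝒜 : ℤ → Submodule k R} (hstd : ∀ i : ℤ, 0 ≤ i → 𝒜 (i + 1) = 𝒜 1 * 𝒜 i) (n : ℕ) :
    (𝒜 n : Set R) ⊆ (Ideal.span (𝒜 1 : Set R) ^ n : Ideal R) := by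
  induction n with
  | zero => simp
  | succ n ih =>
    intro r hr
    rw [SetLike.mem_coe, Nat.cast_succ, hstd n n.cast_nonneg] at hr
    rw [SetLike.mem_coe, pow_succ']
    refine Submodule.mul_induction_on hr (fun x hx x' hx' => ?_) (fun _ _ => add_mem)
    exact Ideal.mul_mem_mul (Ideal.subset_span hx) (ih hx')

section Conductor

variable {R K : Type*} [CommRing R] [CommRing K] [Algebra R K] {A : Subalgebra R K} {z : K}

theorem mul_mem_conductorSet {a : K} (ha : a ∈ A)
    (hz : z ∈ (conductorSet (A : Set K) : Submodule R K)) :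
    a * z ∈ (conductorSet (A : Set K) : Submodule R K) := fun b hb => by
  obtain ⟨r, hr⟩ := hz (a * b) (mul_mem ha hb)
  exact ⟨r, by rw [← hr]; ring⟩

theorem exists_algebraMap_eq_of_mem_conductorSet
    (hz : z ∈ (conductorSet (A : Set K) : Submodule R K)) :
    ∃ r : R, algebraMap R K r = z := by
  obtain ⟨r, hr⟩ := hz 1 A.one_mem
  exact ⟨r, by rw [← hr, mul_one]⟩

end Conductor

section Blowup

variable {R K : Type*} [CommRing R] [CommRing K] [Algebra R K] {𝔪 : Ideal R} {y : R}

theorem exists_mem_adjoin_mOverY_mul_pow_eq (hy : IsUnit (algebraMap R K y)) {n : ℕ} {m : R}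
    (hm : m ∈ 𝔪 ^ n) :
    ∃ w ∈ Algebra.adjoin R (mOverY 𝔪 y), w * algebraMap R K y ^ n = algebraMap R K m := by
  induction n generalizing m with
  | zero => exact ⟨algebraMap R K m, Subalgebra.algebraMap_mem _ m, by simp⟩
  | succ n ih =>
    rw [pow_succ] at hm
    refine Submodule.mul_induction_on hm (fun m₁ hm₁ m₂ hm₂ => ?_) ?_
    · obtain ⟨w, hw, hwm⟩ := ih hm₁
      obtain ⟨u, hu⟩ := hy
      have hinv : (↑u⁻¹ : K) * u = 1 := u.inv_mul
      have hm₂y : algebraMap R K m₂ * ↑u⁻¹ ∈ mOverY 𝔪 y :=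
        ⟨m₂, hm₂, by rw [← hu, Units.inv_mul_cancel_right]⟩
      refine ⟨w * (algebraMap R K m₂ * ↑u⁻¹), mul_mem hw (Algebra.subset_adjoin hm₂y), ?_⟩
      rw [map_mul, ← hwm, ← hu]
      linear_combination (w * ↑u ^ n * algebraMap R K m₂) * hinv
    · rintro x x' ⟨w, hw, hwx⟩ ⟨w', hw', hwx'⟩
      exact ⟨w + w', add_mem hw hw', by rw [add_mul, hwx, hwx', map_add]⟩

theorem mem_adjoin_mOverY_of_mul_pow_eq (hy : IsUnit (algebraMap R K y)) {n : ℕ} {m : R}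
    (hm : m ∈ 𝔪 ^ n) {z : K} (hz : z * algebraMap R K y ^ n = algebraMap R K m) :
    z ∈ Algebra.adjoin R (mOverY 𝔪 y) := by
  obtain ⟨w, hw, hwm⟩ := exists_mem_adjoin_mOverY_mul_pow_eq hy hm
  rwa [(hy.pow n).mul_right_cancel (hz.trans hwm.symm)]

theorem exists_mem_pow_mul_pow_eq_of_mem_adjoin_mOverY (hy : IsUnit (algebraMap R K y))
    (hym : y ∈ 𝔪) {c : ℕ} (hred : ∀ n, c ≤ n → 𝔪 ^ (n + 1) = Ideal.span {y} * 𝔪 ^ n)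
    {n : ℕ} (hn : c ≤ n) {z : K}
    (hz : z ∈ Algebra.adjoin R (mOverY 𝔪 y)) :
    ∃ t ∈ 𝔪 ^ n, z * algebraMap R K y ^ n = algebraMap R K t := by
  induction hz using Algebra.adjoin_induction with
  | mem x hx =>
    obtain ⟨m, hm, hxm⟩ := hx
    have hmy : m * y ^ n ∈ Ideal.span {y} * 𝔪 ^ n := by
      rw [← hred n hn, pow_succ']
      exact Ideal.mul_mem_mul hm (Ideal.pow_mem_pow hym n)
    obtain ⟨t, ht, hyt⟩ := Ideal.mem_span_singleton_mul.mp hmy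
    refine ⟨t, ht, hy.mul_right_cancel ?_⟩
    have := congrArg (algebraMap R K) hyt
    simp only [map_mul, map_pow] at this
    linear_combination algebraMap R K y ^ n * hxm - this
  | algebraMap r =>
    exact ⟨r * y ^ n, Ideal.mul_mem_left _ r (Ideal.pow_mem_pow hym n), by rw [map_mul, map_pow]⟩
  | add x x' _ _ hx hx' =>
    obtain ⟨t, ht, hxt⟩ := hx
    obtain ⟨t', ht', hxt'⟩ := hx'
    exact ⟨t + t', add_mem ht ht', by rw [add_mul, hxt, hxt', map_add]⟩
  | mul x x' _ _ hx hx' =>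
    obtain ⟨t, ht, hxt⟩ := hx
    obtain ⟨t', ht', hxt'⟩ := hx'
    have htt' : t * t' ∈ Ideal.span {y ^ n} * 𝔪 ^ n := by
      rw [← Ideal.span_singleton_pow, ← pow_add_eq_pow_mul_of_pow_succ_eq hred hn, pow_add]
      exact Ideal.mul_mem_mul ht ht'
    obtain ⟨u, hu, hyu⟩ := Ideal.mem_span_singleton_mul.mp htt'
    refine ⟨u, hu, (hy.pow n).mul_right_cancel ?_⟩
    have := congrArg (algebraMap R K) hyu
    simp only [map_mul, map_pow] at this
    linear_combination x' * algebraMap R K y ^ n * hxt + algebraMap R K t * hxt' - this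

theorem map_colon_pow_eq_span_mul_conductorSet (hinj : Function.Injective (algebraMap R K))
    (hy : IsUnit (algebraMap R K y)) (hym : y ∈ 𝔪) {c : ℕ}
    (hred : ∀ n, c ≤ n → 𝔪 ^ (n + 1) = Ideal.span {y} * 𝔪 ^ n) {n : ℕ} (hn : c ≤ n) (d : ℕ) :
    Submodule.map (Algebra.linearMap R K)
        (Submodule.colon (Ideal.span {y} ^ (n + d)) (𝔪 ^ n : Ideal R))
      = Submodule.span R {algebraMap R K y ^ d}
          * conductorSet ((Algebra.adjoin R (mOverY 𝔪 y) : Subalgebra R K) : Set K) := by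
  simp only [Ideal.span_singleton_pow]
  apply le_antisymm
  · rintro _ ⟨r, hr, rfl⟩
    rw [SetLike.mem_coe, Submodule.mem_colon] at hr
    -- `r yⁿ ∈ (yⁿ⁺ᵈ)` already forces `r / yᵈ` to lie in `R`
    obtain ⟨s, hs⟩ := Ideal.mem_span_singleton'.mp (hr _ (Ideal.pow_mem_pow hym n))
    have hrs : algebraMap R K r = algebraMap R K y ^ d * algebraMap R K s := by
      refine (hy.pow n).mul_right_cancel ?_
      have := congrArg (algebraMap R K) hs
      simp only [smul_eq_mul, map_mul, map_pow] at this
      linear_combination -this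
    refine Submodule.mem_span_singleton_mul.mpr ⟨algebraMap R K s, fun b hb => ?_, hrs.symm⟩
    obtain ⟨t, ht, hbt⟩ := exists_mem_pow_mul_pow_eq_of_mem_adjoin_mOverY hy hym hred hn hb
    obtain ⟨u, hu⟩ := Ideal.mem_span_singleton'.mp (hr t ht)
    refine ⟨u, ((hy.pow n).mul (hy.pow d)).mul_right_cancel ?_⟩
    have := congrArg (algebraMap R K) hu
    simp only [smul_eq_mul, map_mul, map_pow] at this
    linear_combination algebraMap R K s * algebraMap R K y ^ d * hbt - algebraMap R K t * hrs
      - this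
  · intro x hx
    obtain ⟨z, hz, rfl⟩ := Submodule.mem_span_singleton_mul.mp hx
    obtain ⟨s, rfl⟩ := exists_algebraMap_eq_of_mem_conductorSet hz
    refine ⟨y ^ d * s, Submodule.mem_colon.mpr fun m hm => ?_, by simp⟩
    obtain ⟨w, hw, hwm⟩ := exists_mem_adjoin_mOverY_mul_pow_eq hy hm
    obtain ⟨u, hu⟩ := hz w hw
    refine Ideal.mem_span_singleton'.mpr ⟨u, hinj ?_⟩
    simp only [smul_eq_mul, map_mul, map_pow]
    linear_combination algebraMap R K y ^ d * algebraMap R K s * hwm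
      - algebraMap R K y ^ d * algebraMap R K y ^ n * hu

theorem pow_smul_conductorSet_adjoin_mOverY (hy : IsUnit (algebraMap R K y)) (hym : y ∈ 𝔪)
    (d : ℕ) :
    𝔪 ^ d • conductorSet ((Algebra.adjoin R (mOverY 𝔪 y) : Subalgebra R K) : Set K)
      = Submodule.span R {algebraMap R K y ^ d}
          * conductorSet ((Algebra.adjoin R (mOverY 𝔪 y) : Subalgebra R K) : Set K) := by
  apply le_antisymm
  · refine Submodule.smul_le.mpr fun m hm z hz => ?_
    obtain ⟨w, hw, hwm⟩ := exists_mem_adjoin_mOverY_mul_pow_eq hy hm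
    refine Submodule.mem_span_singleton_mul.mpr ⟨w * z, mul_mem_conductorSet hw hz, ?_⟩
    rw [Algebra.smul_def, ← hwm]
    ring
  · intro x hx
    obtain ⟨z, hz, rfl⟩ := Submodule.mem_span_singleton_mul.mp hx
    rw [← map_pow, ← Algebra.smul_def]
    exact Submodule.smul_mem_smul (Ideal.pow_mem_pow hym d) hz

end Blowup

theorem statement_14_general
    {k R : Type*} [Field k] [CommRing R] [Algebra k R]
    -- `R` is standard graded over `k`:
    (𝒜 : ℤ → Submodule k R)
    (hstd : ∀ i : ℤ, 0 ≤ i → 𝒜 (i + 1) = 𝒜 1 * 𝒜 i)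
    -- `𝔪` is the homogeneous maximal ideal:
    (𝔪 : Ideal R) (h𝔪 : 𝔪 = Ideal.span (𝒜 1 : Set R))
    -- `y` is a linear nonzerodivisor parameter (this encodes that `R` is Cohen–Macaulay):
    (y : R) (hy1 : y ∈ 𝒜 1) (hynzd : y ∈ nonZeroDivisors R)
    -- `a` is the `a`-invariant, characterized by the reduction number `r_(y)(𝔪) = a + 1`:
    (a : ℤ) (ha : 0 ≤ a + 1)
    (hred : ∀ n : ℤ, a + 1 ≤ n → ipow 𝔪 (n + 1) = Ideal.span {y} * ipow 𝔪 n)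
    -- `B` is a subring of the total quotient ring `K` containing `R[𝔪/y]`:
    (B : Subalgebra R (FractionRing R))
    (hAB : Algebra.adjoin R (mOverY 𝔪 y) ≤ B)
    -- `B` is non-negatively graded (for the grading of `K` induced from that of `R`):
    (hBnonneg : ∀ z ∈ B, z ∈ Submodule.span R (⋃ i : ℤ, ⋃ (_ : 0 ≤ i),
      {z' : FractionRing R | ∃ n : ℕ, ∃ r ∈ 𝒜 (i + n),
        z' * algebraMap R (FractionRing R) (y ^ n) = algebraMap R (FractionRing R) r}))
    (i j : ℤ) (hj : a + 1 ≤ j) (hij : j ≤ i) :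
    B = Algebra.adjoin R (mOverY 𝔪 y)
    ∧ Submodule.map (Algebra.linearMap R (FractionRing R))
          (Submodule.colon (ipow (Ideal.span {y}) i) (ipow 𝔪 j))
        = Submodule.span R {(algebraMap R (FractionRing R) y) ^ (i - j).toNat}
            * conductorSet (B : Set (FractionRing R))
    ∧ Submodule.map (Algebra.linearMap R (FractionRing R))
          (Submodule.colon (ipow (Ideal.span {y}) i) (ipow 𝔪 j))
        = ipow 𝔪 (i - j) • conductorSet (B : Set (FractionRing R)) := by
  have hy : IsUnit (algebraMap R (FractionRing R) y) :=
    IsLocalization.map_units _ (⟨y, hynzd⟩ : nonZeroDivisors R)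
  have hym : y ∈ 𝔪 := h𝔪 ▸ Ideal.subset_span hy1
  have hred' : ∀ n : ℕ, (a + 1).toNat ≤ n → 𝔪 ^ (n + 1) = Ideal.span {y} * 𝔪 ^ n :=
    fun n hn => by simpa [ipow] using hred n (by omega)
  have hBA : B = Algebra.adjoin R (mOverY 𝔪 y) := by
    refine le_antisymm (fun z hz => ?_) hAB
    refine (Submodule.span_le (p := Subalgebra.toSubmodule (Algebra.adjoin R (mOverY 𝔪 y)))).mpr
      ?_ (hBnonneg z hz)
    simp only [Set.iUnion_subset_iff]
    rintro p hp z ⟨n, r, hr, hzr⟩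
    have hr𝔪 : r ∈ 𝔪 ^ n := Ideal.pow_le_pow_right (by omega : n ≤ (p + n).toNat)
      (h𝔪 ▸ grade_subset_span_pow hstd _ (by rwa [Int.toNat_of_nonneg (by omega)]))
    exact mem_adjoin_mOverY_of_mul_pow_eq hy hr𝔪 (by rwa [← map_pow])
  subst hBA
  have hcolon := map_colon_pow_eq_span_mul_conductorSet (IsFractionRing.injective R _) hy hym
    hred' (n := j.toNat) (by omega) (i - j).toNat
  rw [show j.toNat + (i - j).toNat = i.toNat by omega] at hcolon
  unfold ipow
  exact ⟨rfl, hcolon, hcolon.trans (pow_smul_conductorSet_adjoin_mOverY hy hym _).symm⟩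

/-- **Remark 2.18**: Let `R` be a one-dimensional reduced standard graded Cohen–Macaulay
`k`-algebra with `a`-invariant `a`, `y` a linear parameter, `K` the total ring of quotients,
and `B` any non-negatively graded Noetherian ring with `R[𝔪/y] ⊆ B ⊆ K` that is a finite
`R[𝔪/y]`-module.  Then `B = R[𝔪/y]`, and for every `i ≥ j` and `j ≥ a + 1` one has
`(y^i) :_R 𝔪^j = y^(i-j)(R :_K B) = 𝔪^(i-j)(R :_K B)`. -/
theorem statement_14
    {k R : Type*} [Field k] [CommRing R] [Algebra k R] [IsNoetherianRing R] [IsReduced R]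
    -- `R` is standard graded over `k`:
    (𝒜 : ℤ → Submodule k R) [GradedAlgebra 𝒜]
    (hneg : ∀ i : ℤ, i < 0 → 𝒜 i = ⊥)
    (hstd : ∀ i : ℤ, 0 ≤ i → 𝒜 (i + 1) = 𝒜 1 * 𝒜 i)
    -- of dimension one:
    (hdim : ringKrullDim R = 1)
    -- `𝔪` is the homogeneous maximal ideal:
    (𝔪 : Ideal R) (h𝔪 : 𝔪 = Ideal.span (𝒜 1 : Set R))
    -- `y` is a linear nonzerodivisor parameter (this encodes that `R` is Cohen–Macaulay):
    (y : R) (hy1 : y ∈ 𝒜 1) (hynzd : y ∈ nonZeroDivisors R)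
    (hsop : 𝔪 ≤ (Ideal.span {y}).radical)
    -- `a` is the `a`-invariant, characterized by the reduction number `r_(y)(𝔪) = a + 1`:
    (a : ℤ) (ha : 0 ≤ a + 1)
    (hred : ∀ n : ℤ, a + 1 ≤ n → ipow 𝔪 (n + 1) = Ideal.span {y} * ipow 𝔪 n)
    (hmin : ¬ ipow 𝔪 (a + 1) = Ideal.span {y} * ipow 𝔪 a)
    -- `B` is a subring of the total quotient ring `K` containing `R[𝔪/y]`:
    (B : Subalgebra R (FractionRing R))
    (hAB : Algebra.adjoin R (mOverY 𝔪 y) ≤ B)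
    -- `B` is Noetherian:
    (hBnoeth : IsNoetherianRing B)
    -- `B` is a finite module over `R[𝔪/y]`:
    (hBfin : ∃ s : Finset (FractionRing R), ∀ z ∈ B,
      z ∈ Subalgebra.toSubmodule (Algebra.adjoin R (mOverY 𝔪 y))
          * Submodule.span R (s : Set (FractionRing R)))
    -- `B` is non-negatively graded (for the grading of `K` induced from that of `R`):
    (hBnonneg : ∀ z ∈ B, z ∈ Submodule.span R (⋃ i : ℤ, ⋃ (_ : 0 ≤ i),
      {z' : FractionRing R | ∃ n : ℕ, ∃ r ∈ 𝒜 (i + n),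
        z' * algebraMap R (FractionRing R) (y ^ n) = algebraMap R (FractionRing R) r}))
    (i j : ℤ) (hj : a + 1 ≤ j) (hij : j ≤ i) :
    B = Algebra.adjoin R (mOverY 𝔪 y)
    ∧ Submodule.map (Algebra.linearMap R (FractionRing R))
          (Submodule.colon (ipow (Ideal.span {y}) i) (ipow 𝔪 j))
        = Submodule.span R {(algebraMap R (FractionRing R) y) ^ (i - j).toNat}
            * conductorSet (B : Set (FractionRing R))
    ∧ Submodule.map (Algebra.linearMap R (FractionRing R))
          (Submodule.colon (ipow (Ideal.span {y}) i) (ipow 𝔪 j))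
        = ipow 𝔪 (i - j) • conductorSet (B : Set (FractionRing R)) :=
  statement_14_general 𝒜 hstd 𝔪 h𝔪 y hy1 hynzd a ha hred B hAB hBnonneg i j hj hij
end

section
/- Let k be an infinite field and R a standard graded Cohen–Macaulay k-algebra of dimension 1. Let H be a homogeneous R-ideal such that H_𝔭 = 0 for every minimal prime 𝔭 of H. Then there exists a homogeneous element of degree a(R) + 1 in 0 : H that is not contained in any minimal prime of H. -/
theorem Submodule.exists_mem_forall_notMem_of_forall_exists {ι K M : Type*} [Finite ι] [Field K]
    [Infinite K] [AddCommGroup M] [Module K M] (V : Submodule K M) (p : ι → Submodule K M)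
    (h : ∀ i, ∃ x ∈ V, x ∉ p i) : ∃ x ∈ V, ∀ i, x ∉ p i := by
  obtain ⟨x, hx⟩ := Submodule.exists_forall_notMem_of_forall_ne_top (fun i ↦ (p i).comap V.subtype)
    fun i hi ↦ by
      obtain ⟨x, hxV, hxp⟩ := h i
      exact hxp (by simpa using hi.ge (Submodule.mem_top (x := ⟨x, hxV⟩)))
  exact ⟨x, x.2, hx⟩

section CommRing

variable {R : Type*} [CommRing R]

theorem Ideal.annihilator_not_le_of_forall_exists_mul_eq_zero {I p : Ideal R} [p.IsPrime]
    [Module.Finite R I] (h : ∀ x ∈ I, ∃ s ∉ p, s * x = 0) : ¬ I.annihilator ≤ p := by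
  have : (⟨p, ‹_›⟩ : PrimeSpectrum R) ∉ Module.support R I :=
    Module.notMem_support_iff'.mpr fun x ↦
      let ⟨s, hs, hsx⟩ := h x x.2
      ⟨s, hs, Subtype.ext hsx⟩
  rwa [Module.mem_support_iff_of_finite] at this

theorem Ideal.mem_minimalPrimes_of_annihilator_not_le {I p : Ideal R} (hp : p ∈ I.minimalPrimes)
    (hann : ¬ I.annihilator ≤ p) : p ∈ minimalPrimes R := by
  refine ⟨⟨hp.1.1, bot_le⟩, fun q ⟨hq, _⟩ hqp ↦ hp.2 ⟨hq, ?_⟩ hqp⟩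
  have : I * I.annihilator ≤ q := (Submodule.mul_annihilator I).trans_le bot_le
  exact (hq.mul_le.mp this).resolve_right fun h ↦ hann (h.trans hqp)

theorem Ideal.mul_mem_annihilator_iff_of_mem_nonZeroDivisors {I : Ideal R} {y w : R}
    (hy : y ∈ nonZeroDivisors R) :
    y * w ∈ I.annihilator ↔ w ∈ I.annihilator := by
  simp only [Submodule.mem_annihilator, smul_eq_mul, mul_assoc,
    mul_left_mem_nonZeroDivisors_eq_zero_iff hy]

end CommRing

section Graded

open DirectSum

variable {ι σ A : Type*} [DecidableEq ι] [SetLike σ A] (𝒜 : ι → σ)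

theorem Ideal.IsHomogeneous.exists_homogeneous_notMem [AddMonoid ι] [Semiring A]
    [AddSubmonoidClass σ A] [GradedRing 𝒜] {J p : Ideal A} (hJ : J.IsHomogeneous 𝒜) (h : ¬ J ≤ p) :
    ∃ i, ∃ x ∈ 𝒜 i, x ∈ J ∧ x ∉ p := by
  classical
  obtain ⟨s, hsJ, hsp⟩ := SetLike.not_le_iff_exists.mp h
  by_contra! hall
  exact hsp <| sum_support_decompose 𝒜 s ▸
    p.sum_mem fun i _ ↦ hall i _ (SetLike.coe_mem _) (hJ i hsJ)

theorem Ideal.IsHomogeneous.annihilator [AddRightCancelMonoid ι] [CommSemiring A]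
    [AddSubmonoidClass σ A] [GradedRing 𝒜] {J : Ideal A} (hJ : J.IsHomogeneous 𝒜) :
    J.annihilator.IsHomogeneous 𝒜 := by
  classical
  intro d s hs
  have hhom : ∀ j, ∀ h ∈ 𝒜 j, h ∈ J → (decompose 𝒜 s d : A) * h = 0 := fun j h hj hJh ↦ by
    rw [← coe_decompose_mul_add_of_right_mem 𝒜 hj, ← smul_eq_mul,
      Submodule.mem_annihilator.mp hs h hJh, decompose_zero, DirectSum.zero_apply,
      ZeroMemClass.coe_zero]
  refine Submodule.mem_annihilator.mpr fun h hh ↦ ?_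
  rw [smul_eq_mul, ← sum_support_decompose 𝒜 h, Finset.mul_sum]
  exact Finset.sum_eq_zero fun j _ ↦ hhom j _ (SetLike.coe_mem _) (hJ j hh)

theorem exists_homogeneous_eq_mul_of_mem_span_singleton [AddLeftCancelMonoid ι] [CommSemiring A]
    [AddSubmonoidClass σ A] [GradedRing 𝒜] {i j : ι} {y z : A} (hy : y ∈ 𝒜 i) (hz : z ∈ 𝒜 (i + j))
    (hzy : z ∈ Ideal.span {y}) : ∃ w ∈ 𝒜 j, z = y * w := by
  obtain ⟨w, rfl⟩ := Ideal.mem_span_singleton'.mp hzy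
  refine ⟨decompose 𝒜 w j, SetLike.coe_mem _, ?_⟩
  rw [mul_comm w, ← coe_decompose_mul_add_of_left_mem 𝒜 hy,
    decompose_of_mem_same 𝒜 (mul_comm w y ▸ hz)]

end Graded

section IntGraded

variable {A σ : Type*} [Semiring A] [SetLike σ A] {𝒜 : ℤ → σ} {y : A} {P : A → Prop}

theorem exists_mem_graded_of_le [AddSubmonoidClass σ A] [GradedRing 𝒜] (hy : y ∈ 𝒜 1)
    (hP : ∀ w, P w → P (y * w)) {d e : ℤ} (hde : d ≤ e) {z : A} (hz : z ∈ 𝒜 d) (hPz : P z) :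
    ∃ x ∈ 𝒜 e, P x := by
  induction e, hde using Int.leInduction with
  | base => exact ⟨z, hz, hPz⟩
  | succ e _ ih =>
    obtain ⟨x, hx, hPx⟩ := ih
    exact ⟨y * x, add_comm 1 e ▸ SetLike.mul_mem_graded hy hx, hP x hPx⟩

theorem exists_mem_graded_of_ge {e : ℤ}
    (hdiv : ∀ n, e ≤ n → ∀ z ∈ 𝒜 (n + 1), ∃ w ∈ 𝒜 n, z = y * w) (hP : ∀ w, P (y * w) → P w)
    {d : ℤ} (hed : e ≤ d) {z : A} (hz : z ∈ 𝒜 d) (hPz : P z) : ∃ x ∈ 𝒜 e, P x := by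
  induction d, hed using Int.leInduction generalizing z with
  | base => exact ⟨z, hz, hPz⟩
  | succ d hed ih =>
    obtain ⟨w, hw, rfl⟩ := hdiv d hed z hz
    exact ih hw (hP w hPz)

theorem exists_mem_graded_of_mul_iff [AddSubmonoidClass σ A] [GradedRing 𝒜] {e : ℤ}
    (hy : y ∈ 𝒜 1) (hdiv : ∀ n, e ≤ n → ∀ z ∈ 𝒜 (n + 1), ∃ w ∈ 𝒜 n, z = y * w)
    (hP : ∀ w, P (y * w) ↔ P w) {d : ℤ} {z : A} (hz : z ∈ 𝒜 d) (hPz : P z) :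
    ∃ x ∈ 𝒜 e, P x := by
  rcases le_total d e with hde | hed
  · exact exists_mem_graded_of_le hy (fun w ↦ (hP w).mpr) hde hz hPz
  · exact exists_mem_graded_of_ge hdiv (fun w ↦ (hP w).mp) hed hz hPz

end IntGraded

section StandardGraded

variable {k R : Type*} [CommSemiring k] [CommRing R] [Algebra k R] {𝒜 : ℤ → Submodule k R}

theorem natCast_graded_le_span_pow (hstd : ∀ i : ℤ, 0 ≤ i → 𝒜 (i + 1) = 𝒜 1 * 𝒜 i) (n : ℕ) :
    𝒜 n ≤ (Ideal.span (𝒜 1 : Set R) ^ n).restrictScalars k := by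
  induction n with
  | zero => simp
  | succ n ih =>
    rw [Nat.cast_succ, hstd n n.cast_nonneg, pow_succ']
    exact Submodule.mul_le.mpr fun r hr b hb ↦ Ideal.mul_mem_mul (Ideal.subset_span hr) (ih hb)

theorem graded_le_ipow_span (hstd : ∀ i : ℤ, 0 ≤ i → 𝒜 (i + 1) = 𝒜 1 * 𝒜 i) (n : ℤ) :
    𝒜 n ≤ (ipow (Ideal.span (𝒜 1 : Set R)) n).restrictScalars k := by
  rcases le_total 0 n with hn | hn
  · lift n to ℕ using hn
    exact natCast_graded_le_span_pow hstd n
  · simp [ipow, Int.toNat_of_nonpos hn]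

theorem exists_graded_eq_mul_of_ipow_succ_eq [GradedAlgebra 𝒜]
    (hstd : ∀ i : ℤ, 0 ≤ i → 𝒜 (i + 1) = 𝒜 1 * 𝒜 i) {y : R} (hy : y ∈ 𝒜 1) {e : ℤ}
    (hred : ∀ n : ℤ, e ≤ n → ipow (Ideal.span (𝒜 1 : Set R)) (n + 1) =
      Ideal.span {y} * ipow (Ideal.span (𝒜 1 : Set R)) n)
    (n : ℤ) (hn : e ≤ n) (z : R) (hz : z ∈ 𝒜 (n + 1)) : ∃ w ∈ 𝒜 n, z = y * w := by
  have hzy : z ∈ Ideal.span {y} := by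
    have := graded_le_ipow_span hstd (n + 1) hz
    rw [Submodule.restrictScalars_mem, hred n hn] at this
    exact Ideal.mul_le_left this
  exact exists_homogeneous_eq_mul_of_mem_span_singleton 𝒜 hy (by rwa [add_comm] at hz) hzy

end StandardGraded

theorem statement_15_general
    {k R : Type*} [Field k] [Infinite k] [CommRing R] [Algebra k R] [IsNoetherianRing R]
    -- `R` is standard graded over `k`:
    (𝒜 : ℤ → Submodule k R) [GradedAlgebra 𝒜]
    (hstd : ∀ i : ℤ, 0 ≤ i → 𝒜 (i + 1) = 𝒜 1 * 𝒜 i)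
    -- `𝔪` is the homogeneous maximal ideal:
    (𝔪 : Ideal R) (h𝔪 : 𝔪 = Ideal.span (𝒜 1 : Set R))
    -- `y` is a linear nonzerodivisor parameter (this encodes that `R` is Cohen–Macaulay):
    (y : R) (hy1 : y ∈ 𝒜 1) (hynzd : y ∈ nonZeroDivisors R)
    -- `a` is the `a`-invariant of `R`, characterized by the reduction number `r_(y)(𝔪) = a + 1`:
    (a : ℤ)
    (hred : ∀ n : ℤ, a + 1 ≤ n → ipow 𝔪 (n + 1) = Ideal.span {y} * ipow 𝔪 n)
    -- `H` is a homogeneous ideal that vanishes locally at each of its minimal primes: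
    (H : Ideal R) (hH : Ideal.IsHomogeneous 𝒜 H)
    (hloc : ∀ p ∈ H.minimalPrimes, ∀ h ∈ H, ∃ s ∉ p, s * h = 0) :
    ∃ x ∈ 𝒜 (a + 1), x ∈ Submodule.colon (⊥ : Ideal R) H ∧
      ∀ p ∈ H.minimalPrimes, x ∉ p := by
  subst h𝔪
  have hdiv := exists_graded_eq_mul_of_ipow_succ_eq hstd hy1 hred
  have hper (p : H.minimalPrimes) :
      ∃ x ∈ H.annihilator.restrictScalars k ⊓ 𝒜 (a + 1), x ∉ p.1.restrictScalars k := by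
    obtain ⟨p, hp⟩ := p
    have hpr : p.IsPrime := hp.1.1
    have hann := Ideal.annihilator_not_le_of_forall_exists_mul_eq_zero (hloc p hp)
    have hyp : y ∉ p := fun h ↦ notMem_nonZeroDivisors_of_mem_mem_minimalPrimes h
      (Ideal.mem_minimalPrimes_of_annihilator_not_le hp hann) hynzd
    obtain ⟨d, z, hz, hzH, hzp⟩ :=
      (Ideal.IsHomogeneous.annihilator 𝒜 hH).exists_homogeneous_notMem 𝒜 hann
    obtain ⟨x, hx, hxH, hxp⟩ :=
      exists_mem_graded_of_mul_iff (P := fun x ↦ x ∈ H.annihilator ∧ x ∉ p) hy1 hdiv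
        (fun w ↦ by rw [Ideal.mul_mem_annihilator_iff_of_mem_nonZeroDivisors hynzd,
          hpr.mul_mem_iff_mem_or_mem, or_iff_right hyp]) hz ⟨hzH, hzp⟩
    exact ⟨x, ⟨hxH, hx⟩, hxp⟩
  have := (H.finite_minimalPrimes_of_isNoetherianRing).to_subtype
  obtain ⟨x, ⟨hxH, hx⟩, hxp⟩ := Submodule.exists_mem_forall_notMem_of_forall_exists _
    (fun p : H.minimalPrimes ↦ p.1.restrictScalars k) hper
  exact ⟨x, hx, by rwa [Submodule.bot_colon], fun p hp ↦ hxp ⟨p, hp⟩⟩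

/-- **Proposition 3.5**: Let `k` be an infinite field and `R` a standard graded
Cohen–Macaulay `k`-algebra of dimension `1`.  Let `H` be a homogeneous `R`-ideal such that
`H_𝔭 = 0` for every minimal prime `𝔭` of `H`.  Then there exists a homogeneous element of
degree `a(R) + 1` in `0 : H` that is not contained in any minimal prime of `H`. -/
theorem statement_15
    {k R : Type*} [Field k] [Infinite k] [CommRing R] [Algebra k R] [IsNoetherianRing R]
    -- `R` is standard graded over `k`:
    (𝒜 : ℤ → Submodule k R) [GradedAlgebra 𝒜]
    (hneg : ∀ i : ℤ, i < 0 → 𝒜 i = ⊥)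
    (hstd : ∀ i : ℤ, 0 ≤ i → 𝒜 (i + 1) = 𝒜 1 * 𝒜 i)
    -- of dimension one:
    (hdim : ringKrullDim R = 1)
    -- `𝔪` is the homogeneous maximal ideal:
    (𝔪 : Ideal R) (h𝔪 : 𝔪 = Ideal.span (𝒜 1 : Set R))
    -- `y` is a linear nonzerodivisor parameter (this encodes that `R` is Cohen–Macaulay):
    (y : R) (hy1 : y ∈ 𝒜 1) (hynzd : y ∈ nonZeroDivisors R)
    (hsop : 𝔪 ≤ (Ideal.span {y}).radical)
    -- `a` is the `a`-invariant of `R`, characterized by the reduction number `r_(y)(𝔪) = a + 1`: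
    (a : ℤ) (ha : 0 ≤ a + 1)
    (hred : ∀ n : ℤ, a + 1 ≤ n → ipow 𝔪 (n + 1) = Ideal.span {y} * ipow 𝔪 n)
    (hmin : ¬ ipow 𝔪 (a + 1) = Ideal.span {y} * ipow 𝔪 a)
    -- `H` is a homogeneous ideal that vanishes locally at each of its minimal primes:
    (H : Ideal R) (hH : Ideal.IsHomogeneous 𝒜 H)
    (hloc : ∀ p ∈ H.minimalPrimes, ∀ h ∈ H, ∃ s ∉ p, s * h = 0) :
    ∃ x ∈ 𝒜 (a + 1), x ∈ Submodule.colon (⊥ : Ideal R) H ∧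
      ∀ p ∈ H.minimalPrimes, x ∉ p :=
  statement_15_general 𝒜 hstd 𝔪 h𝔪 y hy1 hynzd a hred H hH hloc
end
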